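/- arXiv:1611.08257 — 4 statements merged into one kernel-verified Lean document; each statement's English description precedes it below -/
import Mathlib

section
/- Let Ω ⊆ ℝ^n be the union of finitely many convex polyhedra P_i, i = 1,…,p̄, let x̄ ∈ Ω and u ∈ T(x̄;Ω). Then N(x̄;Ω;u) = ⋃_{v ∈ T(u; T(x̄;Ω))} N̂(v; T(u; T(x̄;Ω))), i.e. the directional limiting normal cone to Ω at x̄ in direction u equals the union, over all v in the tangent cone to T(x̄;Ω) at u, of the Fréchet normal cones to T(u;T(x̄;Ω)) at v. -/
noncomputable section

open Filter Topology Set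

/-- Euclidean space `ℝ^n`. -/
abbrev Euc (n : ℕ) : Type := EuclideanSpace ℝ (Fin n)

variable {E : Type*} [NormedAddCommGroup E] [NormedSpace ℝ E]
variable {Y : Type*} [NormedAddCommGroup Y] [NormedSpace ℝ Y]

/-- The contingent (Bouligand/tangent) cone `T(x;Ω)`; empty when `x ∉ Ω`. -/
def tcone (Ω : Set E) (x : E) : Set E :=
  {u | x ∈ Ω ∧ ∃ t : ℕ → ℝ, ∃ w : ℕ → E, (∀ k, 0 < t k) ∧
    Tendsto t atTop (𝓝 0) ∧ Tendsto w atTop (𝓝 u) ∧ ∀ k, x + t k • w k ∈ Ω}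

/-- The Fréchet (regular) normal cone `N̂(x;Ω)`, viewed as a set of continuous
linear functionals; empty when `x ∉ Ω`. -/
def fnc (Ω : Set E) (x : E) : Set (E →L[ℝ] ℝ) :=
  {ξ | x ∈ Ω ∧ ∀ ε : ℝ, 0 < ε → ∃ δ : ℝ, 0 < δ ∧
    ∀ y ∈ Ω, ‖y - x‖ < δ → ξ (y - x) ≤ ε * ‖y - x‖}

/-- The limiting (Mordukhovich) normal cone `N(x;Ω)`; empty when `x ∉ Ω`. -/
def lnc (Ω : Set E) (x : E) : Set (E →L[ℝ] ℝ) :=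
  {ξ | x ∈ Ω ∧ ∃ xk : ℕ → E, ∃ ξk : ℕ → (E →L[ℝ] ℝ),
    Tendsto xk atTop (𝓝 x) ∧ Tendsto ξk atTop (𝓝 ξ) ∧ ∀ k, ξk k ∈ fnc Ω (xk k)}

/-- The directional limiting normal cone `N(x;Ω;u)`; empty when `x ∉ Ω`. -/
def dlnc (Ω : Set E) (x u : E) : Set (E →L[ℝ] ℝ) :=
  {ξ | x ∈ Ω ∧ ∃ t : ℕ → ℝ, ∃ w : ℕ → E, ∃ ξk : ℕ → (E →L[ℝ] ℝ), (∀ k, 0 < t k) ∧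
    Tendsto t atTop (𝓝 0) ∧ Tendsto w atTop (𝓝 u) ∧ Tendsto ξk atTop (𝓝 ξ) ∧
    ∀ k, ξk k ∈ fnc Ω (x + t k • w k)}

/-- A convex polyhedron: a finite intersection of closed halfspaces. -/
def IsPolyhedron (P : Set E) : Prop :=
  ∃ k : ℕ, ∃ a : Fin k → (E →L[ℝ] ℝ), ∃ b : Fin k → ℝ, P = {x | ∀ j, a j x ≤ b j}

/-- A union of finitely many convex polyhedra. -/
def IsFinUnionPolyhedra (Ω : Set E) : Prop :=
  ∃ p : ℕ, ∃ P : Fin p → Set E, (∀ i, IsPolyhedron (P i)) ∧ Ω = ⋃ i, P i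

/-- The constraint multifunction `M(x) = F(x) - Ω`. -/
def cmap (F : E → Y) (Ω : Set Y) : E → Set Y := fun x => {y | F x - y ∈ Ω}

/-- Metric subregularity of `M` at `(x̄,ȳ) ∈ gph M`. -/
def SubregAt (M : E → Set Y) (x' : E) (y' : Y) : Prop :=
  y' ∈ M x' ∧ ∃ κ : ℝ, 0 < κ ∧ ∃ ε : ℝ, 0 < ε ∧ ∀ x : E, dist x x' < ε →
    EMetric.infEdist x {z | y' ∈ M z} ≤ ENNReal.ofReal κ * EMetric.infEdist y' (M x)

/-- The directional neighborhood `V_{ρ,δ}(u)`. -/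
def dirNbhd (u : E) (ρ δ : ℝ) : Set E :=
  {z | ‖z‖ ≤ ρ ∧ ‖‖u‖ • z - ‖z‖ • u‖ ≤ δ * (‖z‖ * ‖u‖)}

/-- Metric subregularity of `M` in direction `u` at `(x̄,ȳ) ∈ gph M`. -/
def SubregDir (M : E → Set Y) (x' : E) (y' : Y) (u : E) : Prop :=
  y' ∈ M x' ∧ ∃ ρ : ℝ, 0 < ρ ∧ ∃ δ : ℝ, 0 < δ ∧ ∃ κ : ℝ, 0 < κ ∧
    ∀ z ∈ dirNbhd u ρ δ,
      EMetric.infEdist (x' + z) {z' | y' ∈ M z'} ≤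
        ENNReal.ofReal κ * EMetric.infEdist y' (M (x' + z))

/-- Mixed metric regularity/subregularity of `M = (M₁,M₂)` at `(x̄,(ȳ₁,ȳ₂))`. -/
def MixedRegSubreg {Y₁ Y₂ : Type*} [NormedAddCommGroup Y₁] [NormedSpace ℝ Y₁]
    [NormedAddCommGroup Y₂] [NormedSpace ℝ Y₂]
    (M₁ : E → Set Y₁) (M₂ : E → Set Y₂) (x' : E) (y₁' : Y₁) (y₂' : Y₂) : Prop :=
  y₁' ∈ M₁ x' ∧ y₂' ∈ M₂ x' ∧ ∃ κ : ℝ, 0 < κ ∧ ∃ ε : ℝ, 0 < ε ∧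
    ∀ x : E, ∀ y₁ : Y₁, dist x x' < ε → dist y₁ y₁' < ε →
      EMetric.infEdist x {z | y₁ ∈ M₁ z ∧ y₂' ∈ M₂ z} ≤
        ENNReal.ofReal κ * EMetric.infEdist (y₁, y₂') (M₁ x ×ˢ M₂ x)

/-! Near `x̄`, a finite union of polyhedra `Ω` coincides with `x̄ + T(x̄;Ω)`, and `T(x̄;Ω)` is again
a finite union of (polyhedral) cones, cut out by the constraints active at `x̄`; likewise `T(x̄;Ω)`
coincides with `u + T(u;T(x̄;Ω))` near `u`. Fréchet normal cones only see the germ of a set and are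
invariant under positive scaling of the base point in a cone, so for small `t` and `w` near `u`
we get `N̂(x̄ + t w; Ω) = N̂(w - u; T(u;T(x̄;Ω)))`. This gives `⊇` directly (take `w = u + t v`) and
`⊆` up to closure. The closure is harmless: for a finite union of polyhedra `N̂(v;·)` is the polar
of the tangent cone at `v`, only finitely many tangent cones occur, so the union of all Fréchet
normal cones is closed. -/

def IsCone (C : Set E) : Prop := ∀ ⦃t : ℝ⦄, 0 < t → ∀ ⦃u : E⦄, u ∈ C → t • u ∈ C

def polarCone (C : Set E) : Set (E →L[ℝ] ℝ) := {ξ | ∀ u ∈ C, ξ u ≤ 0}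

theorem isClosed_polarCone (C : Set E) : IsClosed (polarCone C) := by
  simp only [polarCone, ofPred_forall]
  exact isClosed_biInter fun u _ =>
    isClosed_le ((ContinuousLinearMap.apply ℝ ℝ u).continuous) continuous_const

section TangentCone

variable {Ω C : Set E} {x u : E}

theorem isCone_tcone : IsCone (tcone Ω x) := by
  rintro s hs u ⟨hx, t, w, htpos, ht0, hw, hmem⟩
  refine ⟨hx, fun k => t k / s, fun k => s • w k, fun k => div_pos (htpos k) hs, ?_,
    hw.const_smul s, fun k => ?_⟩
  · simpa using ht0.div_const s
  · rw [smul_smul, div_mul_cancel₀ _ hs.ne']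
    exact hmem k

theorem mem_tcone_of_eventually (hx : x ∈ Ω) {t : ℕ → ℝ} {w : ℕ → E} (htpos : ∀ k, 0 < t k)
    (ht0 : Tendsto t atTop (𝓝 0)) (hw : Tendsto w atTop (𝓝 u))
    (hmem : ∀ᶠ k in atTop, x + t k • w k ∈ Ω) : u ∈ tcone Ω x := by
  obtain ⟨N, hN⟩ := eventually_atTop.1 hmem
  exact ⟨hx, fun k => t (k + N), fun k => w (k + N), fun k => htpos _,
    ht0.comp (tendsto_add_atTop_nat N), hw.comp (tendsto_add_atTop_nat N),
    fun k => hN _ (Nat.le_add_left N k)⟩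

theorem tcone_eq_of_eventually (hx : x ∈ Ω) (hC : IsClosed C) (hCc : IsCone C)
    (h : ∀ᶠ y in 𝓝 (0 : E), x + y ∈ Ω ↔ y ∈ C) : tcone Ω x = C := by
  ext u
  constructor
  · rintro ⟨-, t, w, htpos, ht0, hw, hmem⟩
    have htw : Tendsto (fun k => t k • w k) atTop (𝓝 0) := by simpa using ht0.smul hw
    refine hC.mem_of_tendsto hw ((htw.eventually h).mono fun k hk => ?_)
    simpa [inv_smul_smul₀ (htpos k).ne'] using hCc (inv_pos.2 (htpos k)) (hk.1 (hmem k))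
  · intro hu
    have ht0 : Tendsto (fun k : ℕ => 1 / ((k : ℝ) + 1)) atTop (𝓝 0) :=
      tendsto_one_div_add_atTop_nhds_zero_nat
    have htpos : ∀ k : ℕ, 0 < 1 / ((k : ℝ) + 1) := fun k => by positivity
    refine mem_tcone_of_eventually hx htpos ht0 tendsto_const_nhds ?_
    have htu : Tendsto (fun k : ℕ => (1 / ((k : ℝ) + 1)) • u) atTop (𝓝 0) := by
      simpa using ht0.smul_const u
    exact (htu.eventually h).mono fun k hk => hk.2 (hCc (htpos k) hu)

end TangentCone

section FrechetNormalCone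

variable {A B C : Set E} {c d x z : E}

theorem fnc_subset_of_eventually (h : ∀ᶠ e in 𝓝 (0 : E), c + e ∈ A ↔ d + e ∈ B) :
    fnc A c ⊆ fnc B d := by
  obtain ⟨ρ, hρ, hρh⟩ := Metric.eventually_nhds_iff.1 h
  rintro ξ ⟨hcA, hξ⟩
  have hdB : d ∈ B := by simpa using (hρh (y := 0) (by simpa using hρ)).1 (by simpa using hcA)
  refine ⟨hdB, fun ε hε => ?_⟩
  obtain ⟨δ, hδ, hδh⟩ := hξ ε hε
  refine ⟨min δ ρ, lt_min hδ hρ, fun y hy hyd => ?_⟩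
  have hA : c + (y - d) ∈ A :=
    (hρh (by simpa [dist_eq_norm] using hyd.trans_le (min_le_right _ _))).2 (by simpa using hy)
  simpa using hδh _ hA (by simpa using hyd.trans_le (min_le_left _ _))

theorem fnc_eq_of_eventually (h : ∀ᶠ e in 𝓝 (0 : E), c + e ∈ A ↔ d + e ∈ B) : fnc A c = fnc B d :=
  (fnc_subset_of_eventually h).antisymm (fnc_subset_of_eventually (h.mono fun _ he => he.symm))

theorem eventually_fnc_add_eq (h : ∀ᶠ y in 𝓝 (0 : E), x + y ∈ A ↔ y ∈ C) :
    ∀ᶠ z in 𝓝 (0 : E), fnc A (x + z) = fnc C z := by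
  refine h.eventually_nhds.mono fun z hz => fnc_eq_of_eventually ?_
  have hshift : Tendsto (z + ·) (𝓝 (0 : E)) (𝓝 z) := by
    simpa using (continuous_const_add z).tendsto 0
  simpa [add_assoc] using hshift.eventually hz

theorem fnc_subset_fnc_smul (hC : IsCone C) {t : ℝ} (ht : 0 < t) : fnc C z ⊆ fnc C (t • z) := by
  rintro ξ ⟨hz, hξ⟩
  refine ⟨hC ht hz, fun ε hε => ?_⟩
  obtain ⟨δ, hδ, hδh⟩ := hξ ε hε
  refine ⟨t * δ, by positivity, fun y hy hyd => ?_⟩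
  have hy' : y - t • z = t • (t⁻¹ • y - z) := by rw [smul_sub, smul_inv_smul₀ ht.ne']
  have hnorm : ‖y - t • z‖ = t * ‖t⁻¹ • y - z‖ := by
    rw [hy', norm_smul, Real.norm_of_nonneg ht.le]
  have hle := hδh _ (hC (inv_pos.2 ht) hy) (lt_of_mul_lt_mul_left (hnorm ▸ hyd) ht.le)
  rw [hnorm, hy', map_smul, smul_eq_mul, mul_left_comm]
  exact mul_le_mul_of_nonneg_left hle ht.le

theorem fnc_smul (hC : IsCone C) {t : ℝ} (ht : 0 < t) : fnc C (t • z) = fnc C z := by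
  refine le_antisymm ?_ (fnc_subset_fnc_smul hC ht)
  simpa [inv_smul_smul₀ ht.ne'] using fnc_subset_fnc_smul hC (inv_pos.2 ht) (z := t • z)

theorem fnc_zero_eq_polarCone (hC : IsCone C) (h0 : (0 : E) ∈ C) : fnc C 0 = polarCone C := by
  ext ξ
  refine ⟨fun ⟨_, hξ⟩ u hu => ?_, fun hξ => ⟨h0, fun ε hε => ⟨1, one_pos, fun y hy _ => ?_⟩⟩⟩
  · by_contra! hpos
    obtain ⟨δ, hδ, hδh⟩ := hξ (ξ u / (‖u‖ + 1)) (by positivity)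
    obtain ⟨s, hs, hsu⟩ : ∃ s : ℝ, 0 < s ∧ ‖s • u‖ < δ := by
      refine ⟨δ / (‖u‖ + 1), by positivity, ?_⟩
      rw [norm_smul, Real.norm_of_nonneg (by positivity), div_mul_eq_mul_div,
        div_lt_iff₀ (by positivity)]
      nlinarith [norm_nonneg u]
    have h := hδh _ (hC hs hu) (by simpa using hsu)
    rw [sub_zero, map_smul, smul_eq_mul, norm_smul, Real.norm_of_nonneg hs.le,
      mul_left_comm] at h
    have h' : ξ u ≤ ξ u / (‖u‖ + 1) * ‖u‖ := le_of_mul_le_mul_left h hs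
    rw [div_mul_eq_mul_div, le_div_iff₀ (by positivity)] at h'
    nlinarith
  · simpa using (hξ y hy).trans (by positivity : (0 : ℝ) ≤ ε * ‖y‖)

theorem biUnion_fnc_eq_iUnion (S : Set E) : ⋃ v ∈ S, fnc S v = ⋃ v, fnc S v := by
  ext ξ
  simp only [mem_iUnion]
  exact ⟨fun ⟨v, _, h⟩ => ⟨v, h⟩, fun ⟨v, h⟩ => ⟨v, h.1, h⟩⟩

end FrechetNormalCone

section DirectionalNormalCone

variable {Ω : Set E} {x u : E}

theorem mem_dlnc_of_eventually (hx : x ∈ Ω) {t : ℕ → ℝ} {w : ℕ → E} {ξk : ℕ → E →L[ℝ] ℝ}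
    {ξ : E →L[ℝ] ℝ} (htpos : ∀ k, 0 < t k) (ht0 : Tendsto t atTop (𝓝 0))
    (hw : Tendsto w atTop (𝓝 u)) (hξ : Tendsto ξk atTop (𝓝 ξ))
    (hmem : ∀ᶠ k in atTop, ξk k ∈ fnc Ω (x + t k • w k)) : ξ ∈ dlnc Ω x u := by
  obtain ⟨N, hN⟩ := eventually_atTop.1 hmem
  exact ⟨hx, fun k => t (k + N), fun k => w (k + N), fun k => ξk (k + N), fun k => htpos _,
    ht0.comp (tendsto_add_atTop_nat N), hw.comp (tendsto_add_atTop_nat N),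
    hξ.comp (tendsto_add_atTop_nat N), fun k => hN _ (Nat.le_add_left N k)⟩

theorem dlnc_subset_closure_iUnion_fnc
    (hΩ : ∀ᶠ z in 𝓝 (0 : E), fnc Ω (x + z) = fnc (tcone Ω x) z)
    (hT : ∀ᶠ z in 𝓝 (0 : E), fnc (tcone Ω x) (u + z) = fnc (tcone (tcone Ω x) u) z) :
    dlnc Ω x u ⊆ closure (⋃ v, fnc (tcone (tcone Ω x) u) v) := by
  rintro ξ ⟨-, t, w, ξk, htpos, ht0, hw, hξ, hmem⟩
  have htw : Tendsto (fun k => t k • w k) atTop (𝓝 0) := by simpa using ht0.smul hw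
  have hwu : Tendsto (fun k => w k - u) atTop (𝓝 0) := by simpa using hw.sub_const u
  refine mem_closure_of_tendsto hξ ?_
  filter_upwards [htw.eventually hΩ, hwu.eventually hT] with k h1 h2
  refine mem_iUnion.2 ⟨w k - u, ?_⟩
  rw [← h2, add_sub_cancel, ← fnc_smul isCone_tcone (htpos k), ← h1]
  exact hmem k

theorem iUnion_fnc_subset_dlnc (hx : x ∈ Ω)
    (hΩ : ∀ᶠ z in 𝓝 (0 : E), fnc Ω (x + z) = fnc (tcone Ω x) z)
    (hT : ∀ᶠ z in 𝓝 (0 : E), fnc (tcone Ω x) (u + z) = fnc (tcone (tcone Ω x) u) z) :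
    ⋃ v, fnc (tcone (tcone Ω x) u) v ⊆ dlnc Ω x u := by
  intro ξ hξ
  obtain ⟨v, hv⟩ := mem_iUnion.1 hξ
  set s : ℕ → ℝ := fun k => 1 / ((k : ℝ) + 1)
  have hs : Tendsto s atTop (𝓝 0) := tendsto_one_div_add_atTop_nhds_zero_nat
  have hspos : ∀ k, 0 < s k := fun k => by positivity
  have hsv : Tendsto (fun k => s k • v) atTop (𝓝 0) := by simpa using hs.smul_const v
  have hw : Tendsto (fun k => u + s k • v) atTop (𝓝 u) := by simpa using hsv.const_add u
  have hsw : Tendsto (fun k => s k • (u + s k • v)) atTop (𝓝 0) := by simpa using hs.smul hw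
  refine mem_dlnc_of_eventually hx hspos hs hw tendsto_const_nhds ?_
  filter_upwards [hsw.eventually hΩ, hsv.eventually hT] with k h1 h2
  rw [h1, fnc_smul isCone_tcone (hspos k), h2, fnc_smul isCone_tcone (hspos k)]
  exact hv

end DirectionalNormalCone

section Polyhedral

theorem isClosed_setOf_forall_le {ι : Type*} (a : ι → E →L[ℝ] ℝ) (b : ι → ℝ) :
    IsClosed {x : E | ∀ j, a j x ≤ b j} := by
  simp only [ofPred_forall]
  exact isClosed_iInter fun j => isClosed_le (a j).continuous continuous_const

theorem isPolyhedron_setOf_forall_le {ι : Type*} [Finite ι] (a : ι → E →L[ℝ] ℝ) (b : ι → ℝ) :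
    IsPolyhedron {x : E | ∀ j, a j x ≤ b j} := by
  obtain ⟨k, ⟨e⟩⟩ := Finite.exists_equiv_fin ι
  refine ⟨k, a ∘ e.symm, b ∘ e.symm, ?_⟩
  ext x
  exact e.forall_congr_left

theorem isFinUnionPolyhedra_iUnion {ι : Type*} [Finite ι] {P : ι → Set E}
    (hP : ∀ i, IsPolyhedron (P i)) : IsFinUnionPolyhedra (⋃ i, P i) := by
  obtain ⟨p, ⟨e⟩⟩ := Finite.exists_equiv_fin ι
  refine ⟨p, P ∘ e.symm, fun i => hP _, ?_⟩
  ext x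
  simp only [mem_iUnion, Function.comp_apply]
  exact e.exists_congr_left

theorem IsFinUnionPolyhedra.isClosed {Ω : Set E} (hΩ : IsFinUnionPolyhedra Ω) : IsClosed Ω := by
  obtain ⟨p, P, hP, rfl⟩ := hΩ
  refine isClosed_iUnion_of_finite fun i => ?_
  obtain ⟨k, a, b, hP⟩ := hP i
  exact hP ▸ isClosed_setOf_forall_le a b

theorem eventually_map_add_le_iff {ℓ : E →L[ℝ] ℝ} {c : ℝ} {x : E} (hx : ℓ x ≤ c) :
    ∀ᶠ y in 𝓝 (0 : E), ℓ (x + y) ≤ c ↔ (ℓ x = c → ℓ y ≤ 0) := by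
  rcases hx.eq_or_lt with hx | hx
  · exact Eventually.of_forall fun y => by simp [hx]
  · have hcont : Tendsto (fun y => ℓ (x + y)) (𝓝 0) (𝓝 (ℓ x)) :=
      (ℓ.continuous.comp (continuous_const_add x)).tendsto' 0 (ℓ x) (by simp)
    filter_upwards [hcont.eventually (gt_mem_nhds hx)] with y hy
    exact iff_of_true hy.le fun h => absurd h hx.ne

variable {p : ℕ} {k : Fin p → ℕ} (a : ∀ i, Fin (k i) → E →L[ℝ] ℝ) (b : ∀ i, Fin (k i) → ℝ)

def polyUnion : Set E := ⋃ i, {x | ∀ j, a i j x ≤ b i j}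

def activeCone (x : E) : Set E :=
  {y | ∃ i, (∀ j, a i j x ≤ b i j) ∧ ∀ j, a i j x = b i j → a i j y ≤ 0}

theorem eventually_add_mem_polyUnion_iff (x : E) :
    ∀ᶠ y in 𝓝 (0 : E), x + y ∈ polyUnion a b ↔ y ∈ activeCone a b x := by
  have hpiece : ∀ i, ∀ᶠ y in 𝓝 (0 : E), (∀ j, a i j (x + y) ≤ b i j) ↔
      (∀ j, a i j x ≤ b i j) ∧ ∀ j, a i j x = b i j → a i j y ≤ 0 := by
    intro i
    by_cases hx : ∀ j, a i j x ≤ b i j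
    · filter_upwards [eventually_all.2 fun j => eventually_map_add_le_iff (hx j)] with y hy
      exact (forall_congr' hy).trans (and_iff_right hx).symm
    · have hshift : Tendsto (x + ·) (𝓝 (0 : E)) (𝓝 x) := by
        simpa using (continuous_const_add x).tendsto 0
      filter_upwards [hshift.eventually
        ((isClosed_setOf_forall_le (a i) (b i)).isOpen_compl.mem_nhds hx)] with y hy
      exact iff_of_false hy fun h => hx h.1
  filter_upwards [eventually_all.2 hpiece] with y hy
  simp only [polyUnion, activeCone, mem_iUnion, mem_ofPred_eq]
  exact exists_congr hy

theorem isFinUnionPolyhedra_activeCone (x : E) : IsFinUnionPolyhedra (activeCone a b x) := by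
  have : activeCone a b x = ⋃ i : {i // ∀ j, a i j x ≤ b i j},
      {y | ∀ j : {j // a i j x = b i j}, a i j y ≤ 0} := by
    ext y
    simp [activeCone]
  exact this ▸ isFinUnionPolyhedra_iUnion fun i => isPolyhedron_setOf_forall_le _ _

theorem isCone_activeCone (x : E) : IsCone (activeCone a b x) := by
  rintro t ht y ⟨i, hi, hy⟩
  refine ⟨i, hi, fun j hj => ?_⟩
  rw [map_smul, smul_eq_mul]
  exact mul_nonpos_of_nonneg_of_nonpos ht.le (hy j hj)

theorem tcone_polyUnion {x : E} (hx : x ∈ polyUnion a b) :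
    tcone (polyUnion a b) x = activeCone a b x :=
  tcone_eq_of_eventually hx (isFinUnionPolyhedra_activeCone a b x).isClosed
    (isCone_activeCone a b x) (eventually_add_mem_polyUnion_iff a b x)

/-- `activeCone a b x` depends on `x` only through the polyhedra containing `x` and the
constraints active at `x`, of which there are finitely many patterns. -/
theorem finite_range_activeCone : (range (activeCone a b)).Finite := by
  refine (finite_range fun q : (Fin p → Prop) × (∀ i, Fin (k i) → Prop) =>
    {y : E | ∃ i, q.1 i ∧ ∀ j, q.2 i j → a i j y ≤ 0}).subset ?_
  rintro _ ⟨x, rfl⟩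
  exact ⟨(fun i => ∀ j, a i j x ≤ b i j, fun i j => a i j x = b i j), rfl⟩

end Polyhedral

section FinUnionPolyhedra

variable {Ω : Set E} {x : E}

theorem IsFinUnionPolyhedra.exists_eq_polyUnion (hΩ : IsFinUnionPolyhedra Ω) :
    ∃ (p : ℕ) (k : Fin p → ℕ) (a : ∀ i, Fin (k i) → E →L[ℝ] ℝ) (b : ∀ i, Fin (k i) → ℝ),
      Ω = polyUnion a b := by
  obtain ⟨p, P, hP, rfl⟩ := hΩ
  choose k a b hab using hP
  exact ⟨p, k, a, b, iUnion_congr hab⟩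

theorem IsFinUnionPolyhedra.eventually_add_mem_iff (hΩ : IsFinUnionPolyhedra Ω) (hx : x ∈ Ω) :
    ∀ᶠ y in 𝓝 (0 : E), x + y ∈ Ω ↔ y ∈ tcone Ω x := by
  obtain ⟨p, k, a, b, rfl⟩ := hΩ.exists_eq_polyUnion
  rw [tcone_polyUnion a b hx]
  exact eventually_add_mem_polyUnion_iff a b x

theorem isFinUnionPolyhedra_tcone (hΩ : IsFinUnionPolyhedra Ω) (hx : x ∈ Ω) :
    IsFinUnionPolyhedra (tcone Ω x) := by
  obtain ⟨p, k, a, b, rfl⟩ := hΩ.exists_eq_polyUnion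
  rw [tcone_polyUnion a b hx]
  exact isFinUnionPolyhedra_activeCone a b x

theorem IsFinUnionPolyhedra.finite_image_tcone (hΩ : IsFinUnionPolyhedra Ω) :
    (tcone Ω '' Ω).Finite := by
  obtain ⟨p, k, a, b, rfl⟩ := hΩ.exists_eq_polyUnion
  refine (finite_range_activeCone a b).subset ?_
  rintro _ ⟨x, hx, rfl⟩
  exact ⟨x, (tcone_polyUnion a b hx).symm⟩

theorem IsFinUnionPolyhedra.eventually_fnc_add_eq_fnc_tcone (hΩ : IsFinUnionPolyhedra Ω)
    (hx : x ∈ Ω) :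
    ∀ᶠ z in 𝓝 (0 : E), fnc Ω (x + z) = fnc (tcone Ω x) z :=
  eventually_fnc_add_eq (hΩ.eventually_add_mem_iff hx)

theorem IsFinUnionPolyhedra.fnc_eq_polarCone (hΩ : IsFinUnionPolyhedra Ω) (hx : x ∈ Ω) :
    fnc Ω x = polarCone (tcone Ω x) := by
  have h0 : (0 : E) ∈ tcone Ω x :=
    (hΩ.eventually_add_mem_iff hx).self_of_nhds.1 (by simpa using hx)
  simpa [fnc_zero_eq_polarCone isCone_tcone h0] using
    (hΩ.eventually_fnc_add_eq_fnc_tcone hx).self_of_nhds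

theorem IsFinUnionPolyhedra.isClosed_iUnion_fnc (hΩ : IsFinUnionPolyhedra Ω) :
    IsClosed (⋃ v, fnc Ω v) := by
  have h : ⋃ v, fnc Ω v = ⋃ C ∈ tcone Ω '' Ω, polarCone C := by
    rw [biUnion_image, ← biUnion_fnc_eq_iUnion]
    exact iUnion₂_congr fun v hv => hΩ.fnc_eq_polarCone hv
  rw [h]
  exact hΩ.finite_image_tcone.isClosed_biUnion fun C _ => isClosed_polarCone C

end FinUnionPolyhedra

/-- Lemma 2.2: the directional limiting normal cone to a finite union of convex
polyhedra is the union of the Fréchet normal cones to the second-order tangent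
sets. -/
theorem stmt1 {n p : ℕ} (Ω : Set (Euc n)) (P : Fin p → Set (Euc n))
    (hpoly : ∀ i, IsPolyhedron (P i)) (hΩ : Ω = ⋃ i, P i)
    (xb u : Euc n) (hx : xb ∈ Ω) (hu : u ∈ tcone Ω xb) :
    dlnc Ω xb u = ⋃ v ∈ tcone (tcone Ω xb) u, fnc (tcone (tcone Ω xb) u) v := by
  have hΩp : IsFinUnionPolyhedra Ω := ⟨p, P, hpoly, hΩ⟩
  have hT : IsFinUnionPolyhedra (tcone Ω xb) := isFinUnionPolyhedra_tcone hΩp hx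
  have hΩloc := hΩp.eventually_fnc_add_eq_fnc_tcone hx
  have hTloc := hT.eventually_fnc_add_eq_fnc_tcone hu
  rw [biUnion_fnc_eq_iUnion]
  refine Subset.antisymm ?_ (iUnion_fnc_subset_dlnc hx hΩloc hTloc)
  exact (dlnc_subset_closure_iUnion_fnc hΩloc hTloc).trans
    (isFinUnionPolyhedra_tcone hT hu).isClosed_iUnion_fnc.closure_subset
end
end

section
/- Let M : ℝ^n ⇉ ℝ^m be a set-valued map and (x̄,ȳ) ∈ gph M. Then M is metrically subregular at (x̄,ȳ) if and only if M is metrically subregular in every direction u ≠ 0 at (x̄,ȳ). -/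
noncomputable section

open Filter Topology Set

variable {E : Type*} [NormedAddCommGroup E] [NormedSpace ℝ E]
variable {Y : Type*} [NormedAddCommGroup Y] [NormedSpace ℝ Y]

/-
For a unit vector `u`, the cone `V_{ρ,δ}(u)` contains every `z` with `‖z‖ ≤ ρ` whose direction
`z / ‖z‖` lies within `δ` of `u`. The balls of radius `δ u` around the unit vectors `u` cover the
compact unit sphere; over a finite subcover, the smallest `ρ u` and the largest `κ u` give a
subregularity estimate on a whole ball around `x̄`.
-/

section Subregularity

variable {E : Type*} [NormedAddCommGroup E] [NormedSpace ℝ E]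
variable {Y : Type*} [NormedAddCommGroup Y]

theorem SubregAt.subregDir {M : E → Set Y} {x' : E} {y' : Y} (h : SubregAt M x' y') (u : E) :
    SubregDir M x' y' u := by
  obtain ⟨hgraph, κ, hκ, ε, hε, H⟩ := h
  refine ⟨hgraph, ε / 2, half_pos hε, 1, one_pos, κ, hκ, fun z hz => H _ ?_⟩
  rw [dist_self_add_left]
  exact hz.1.trans_lt (half_lt_self hε)

theorem mem_dirNbhd_of_norm_inv_smul_sub_le {u z : E} {ρ δ : ℝ} (hu : ‖u‖ = 1) (hzρ : ‖z‖ ≤ ρ)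
    (hzδ : ‖‖z‖⁻¹ • z - u‖ ≤ δ) : z ∈ dirNbhd u ρ δ := by
  refine ⟨hzρ, ?_⟩
  have hscale : ‖u‖ • z - ‖z‖ • u = ‖z‖ • (‖z‖⁻¹ • z - u) := by
    rcases eq_or_ne z 0 with rfl | hz
    · simp
    · rw [smul_sub, smul_smul, mul_inv_cancel₀ (norm_ne_zero_iff.mpr hz), one_smul, hu, one_smul]
  rw [hscale, norm_smul, norm_norm, hu, mul_one, mul_comm]
  exact mul_le_mul_of_nonneg_right hzδ (norm_nonneg z)

theorem subregAt_of_forall_sphere_subregDir [ProperSpace E] {M : E → Set Y} {x' : E} {y' : Y}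
    (hgraph : y' ∈ M x') (h : ∀ u ∈ Metric.sphere (0 : E) 1, SubregDir M x' y' u) :
    SubregAt M x' y' := by
  choose! ρ hρ δ hδ κ hκ H using fun u hu => (h u hu).2
  obtain ⟨t, ht, hcover⟩ := (isCompact_sphere (0 : E) 1).elim_nhds_subcover
    (fun u => Metric.ball u (δ u)) fun u hu => Metric.ball_mem_nhds u (hδ u hu)
  obtain ⟨ε, hε, hερ⟩ : ∃ ε : ℝ, 0 < ε ∧ ∀ u ∈ t, ε ≤ ρ u :=
    ((eventually_mem_nhdsWithin (a := (0 : ℝ)) (s := Ioi 0)).and <| t.eventually_all.2 fun u hu =>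
      nhdsWithin_le_nhds (Iic_mem_nhds (hρ u (ht u hu)))).exists
  obtain ⟨K, hK, hκK⟩ : ∃ K : ℝ, 0 < K ∧ ∀ u ∈ t, κ u ≤ K :=
    ((eventually_gt_atTop 0).and <| t.eventually_all.2 fun u _ => eventually_ge_atTop (κ u)).exists
  refine ⟨hgraph, K, hK, ε, hε, fun x hx => ?_⟩
  obtain ⟨z, rfl⟩ : ∃ z, x = x' + z := ⟨x - x', (add_sub_cancel x' x).symm⟩
  rcases eq_or_ne z 0 with rfl | hz
  · rw [add_zero]
    exact (Metric.infEDist_zero_of_mem (s := {z | y' ∈ M z}) hgraph).trans_le zero_le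
  have hz_sphere : ‖z‖⁻¹ • z ∈ Metric.sphere (0 : E) 1 := by
    rw [mem_sphere_zero_iff_norm, norm_smul, norm_inv, norm_norm,
      inv_mul_cancel₀ (norm_ne_zero_iff.mpr hz)]
  obtain ⟨u, hut, hzu⟩ := mem_iUnion₂.mp (hcover hz_sphere)
  have hz_cone : z ∈ dirNbhd u (ρ u) (δ u) := by
    refine mem_dirNbhd_of_norm_inv_smul_sub_le (mem_sphere_zero_iff_norm.mp (ht u hut)) ?_ ?_
    · rw [dist_self_add_left] at hx
      exact hx.le.trans (hερ u hut)
    · rw [← dist_eq_norm]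
      exact (Metric.mem_ball.mp hzu).le
  calc _ ≤ ENNReal.ofReal (κ u) * _ := H u (ht u hut) z hz_cone
    _ ≤ ENNReal.ofReal K * _ := by gcongr; exact hκK u hut

end Subregularity

/-- Lemma 2.7: metric subregularity is equivalent to metric subregularity in
every nonzero direction. -/
theorem stmt4 {n m : ℕ} (M : Euc n → Set (Euc m)) (xb : Euc n) (yb : Euc m)
    (hgraph : yb ∈ M xb) :
    SubregAt M xb yb ↔ ∀ u : Euc n, u ≠ 0 → SubregDir M xb yb u := by
  constructor
  · exact fun h u _ => h.subregDir u
  · exact fun h => subregAt_of_forall_sphere_subregDir hgraph fun u hu =>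
      h u (ne_zero_of_mem_sphere one_ne_zero ⟨u, hu⟩)
end
end

section
/- Let x̄ be a local minimizer of the disjunctive program (P). Then the multifunction 𝓜^{0,x̄} is not mixed metrically regular/subregular at (x̄,(0,0)), and for every nonzero critical direction 0 ≠ u ∈ 𝓒(x̄) there exists η ∈ ℝ^n such that 𝓜^{η,x̄} is not metrically subregular in direction u at (x̄,(0,0)). -/
noncomputable section

open Filter Topology Set

variable {E : Type*} [NormedAddCommGroup E] [NormedSpace ℝ E]
variable {Y : Type*} [NormedAddCommGroup Y] [NormedSpace ℝ Y]

/-!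
At a local minimizer `xb`, lowering the objective level to `-t` pushes every solution of
`(-t, 0) ∈ 𝓜^{0,xb}(x)` out of a fixed ball around `xb`, while the residual of `(-t, 0)` at `xb`
is only `t`; letting `t ↓ 0` rules out a uniform error bound.

For a critical direction `u` take `η = u`. Near `xb`, solutions `z` of `0 ∈ 𝓜^{u,xb}(z)` are
feasible, so `f z ≥ f xb` and the cubic term forces `⟪u, z - xb⟫ ≤ 0`: they lie at distance at
least `t‖u‖` from `xb + t • u`. Since `Ω` is a finite union of polyhedra, the tangent direction
`F'(xb) u` is a feasible direction of `Ω` at `F xb`; together with `f'(xb) u ≤ 0` this makes the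
residual at `xb + t • u` of order `o(t)`, contradicting subregularity in direction `u`.
-/

open scoped RealInnerProductSpace

theorem eventually_apply_add_smul_le_of_frequently (a : E →L[ℝ] ℝ) {b : ℝ} {y v : E}
    {t : ℕ → ℝ} {w : ℕ → E} (ht : ∀ k, 0 < t k) (ht0 : Tendsto t atTop (𝓝 0))
    (hw : Tendsto w atTop (𝓝 v)) (hfreq : ∃ᶠ k in atTop, a (y + t k • w k) ≤ b) :
    ∀ᶠ s in 𝓝[>] (0 : ℝ), a (y + s • v) ≤ b := by
  have hline : ∀ s : ℝ, ∀ z, a (y + s • z) = a y + s * a z := fun s z => by simp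
  have hy : a y ≤ b := by
    have hlim : Tendsto (fun k => a (y + t k • w k)) atTop (𝓝 (a y)) := by
      simpa [hline] using tendsto_const_nhds.add (ht0.mul ((a.continuous.tendsto v).comp hw))
    exact le_of_tendsto_of_frequently hlim hfreq
  rcases hy.lt_or_eq with hlt | heq
  · have hcont : Tendsto (fun s : ℝ => a (y + s • v)) (𝓝 0) (𝓝 (a y)) := by
      have : Continuous fun s : ℝ => a (y + s • v) := by fun_prop
      simpa using this.tendsto 0
    exact ((hcont.eventually_lt_const hlt).filter_mono nhdsWithin_le_nhds).mono fun _ => le_of_lt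
  · have hv : a v ≤ 0 := by
      refine le_of_tendsto_of_frequently ((a.continuous.tendsto v).comp hw)
        (hfreq.mono fun k hk => ?_)
      rw [hline, heq] at hk
      show a (w k) ≤ 0
      exact nonpos_of_mul_nonpos_right (by linarith) (ht k)
    filter_upwards [eventually_mem_nhdsWithin] with s (hs : 0 < s)
    rw [hline, heq]
    nlinarith

theorem IsPolyhedron.eventually_add_smul_mem_of_frequently {P : Set E} (hP : IsPolyhedron P)
    {y v : E} {t : ℕ → ℝ} {w : ℕ → E} (ht : ∀ k, 0 < t k) (ht0 : Tendsto t atTop (𝓝 0))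
    (hw : Tendsto w atTop (𝓝 v)) (hfreq : ∃ᶠ k in atTop, y + t k • w k ∈ P) :
    ∀ᶠ s in 𝓝[>] (0 : ℝ), y + s • v ∈ P := by
  obtain ⟨K, a, b, rfl⟩ := hP
  simpa only [mem_ofPred_eq, eventually_all] using fun j =>
    eventually_apply_add_smul_le_of_frequently (a j) ht ht0 hw (hfreq.mono fun k hk => hk j)

theorem IsFinUnionPolyhedra.eventually_add_smul_mem_of_mem_tcone {Ω : Set E}
    (hΩ : IsFinUnionPolyhedra Ω) {y v : E} (hv : v ∈ tcone Ω y) :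
    ∀ᶠ s in 𝓝[>] (0 : ℝ), y + s • v ∈ Ω := by
  obtain ⟨p, P, hP, rfl⟩ := hΩ
  obtain ⟨-, t, w, ht, ht0, hw, hmem⟩ := hv
  obtain ⟨i, hi⟩ : ∃ i, ∃ᶠ k in atTop, y + t k • w k ∈ P i :=
    frequently_exists.1 (Frequently.of_forall fun k => mem_iUnion.1 (hmem k))
  exact ((hP i).eventually_add_smul_mem_of_frequently ht ht0 hw hi).mono fun _ hs =>
    mem_iUnion.2 ⟨i, hs⟩

theorem DifferentiableAt.eventually_norm_sub_le {g : E → Y} {x : E} (hg : DifferentiableAt ℝ g x)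
    (u : E) {c : ℝ} (hc : 0 < c) :
    ∀ᶠ s in 𝓝[>] (0 : ℝ), ‖g (x + s • u) - g x - s • fderiv ℝ g x u‖ ≤ c * s := by
  have hline : HasDerivAt (fun s : ℝ => x + s • u) u 0 := by
    simpa using ((hasDerivAt_id (0 : ℝ)).smul_const u).const_add x
  have hg' : HasFDerivAt g (fderiv ℝ g x) (x + (0 : ℝ) • u) := by simpa using hg.hasFDerivAt
  have hcomp : HasDerivAt (fun s : ℝ => g (x + s • u)) (fderiv ℝ g x u) 0 :=
    hg'.comp_hasDerivAt 0 hline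
  have hlo := hasDerivAt_iff_isLittleO.1 hcomp
  simp only [zero_smul, add_zero, sub_zero] at hlo
  filter_upwards [(hlo.def hc).filter_mono nhdsWithin_le_nhds, eventually_mem_nhdsWithin]
    with s hs (hs0 : 0 < s)
  rwa [Real.norm_of_nonneg hs0.le] at hs

theorem le_mul_of_infEDist_le_mul {X Z : Type*} [PseudoMetricSpace X] [PseudoMetricSpace Z]
    {x : X} {S : Set X} {y y' : Z} {T : Set Z} {κ a b : ℝ} (hκ : 0 ≤ κ)
    (h : Metric.infEDist x S ≤ ENNReal.ofReal κ * Metric.infEDist y T)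
    (hS : ∀ z ∈ S, a ≤ dist x z) (hy' : y' ∈ T) (hb : dist y y' ≤ b) : a ≤ κ * b := by
  have hlow : ENNReal.ofReal a ≤ Metric.infEDist x S := Metric.le_infEDist.2 fun z hz =>
    (ENNReal.ofReal_le_ofReal (hS z hz)).trans_eq (edist_dist x z).symm
  have hup : Metric.infEDist y T ≤ ENNReal.ofReal b :=
    (Metric.infEDist_le_edist_of_mem hy').trans (edist_dist y y' ▸ ENNReal.ofReal_le_ofReal hb)
  have := calc
    ENNReal.ofReal a ≤ ENNReal.ofReal κ * Metric.infEDist y T := hlow.trans h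
    _ ≤ ENNReal.ofReal κ * ENNReal.ofReal b := by gcongr
  rwa [← ENNReal.ofReal_mul hκ,
    ENNReal.ofReal_le_ofReal_iff (mul_nonneg hκ (dist_nonneg.trans hb))] at this

theorem not_mixedRegSubreg_of_isLocalMinOn {X : Type*} [NormedAddCommGroup X] {f : X → ℝ}
    {F : X → Y} {Ω : Set Y} {xb : X}
    (hfeas : F xb ∈ Ω) (hmin : IsLocalMinOn f {x | F x ∈ Ω} xb) :
    ¬ MixedRegSubreg (cmap (fun x => f x - f xb) (Iic (0 : ℝ))) (cmap F Ω) xb 0 0 := by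
  rintro ⟨-, -, κ, hκ, ε, hε, hreg⟩
  obtain ⟨r, hr, hrmin⟩ := Metric.mem_nhdsWithin_iff.1 hmin
  set t := min (ε / 2) (r / (2 * κ))
  have ht : 0 < t := by positivity
  have htε : dist (-t) 0 < ε := by
    rw [Real.dist_eq, sub_zero, abs_neg, abs_of_pos ht]
    exact (min_le_left _ _).trans_lt (half_lt_self hε)
  have hrt : r ≤ κ * t := by
    refine le_mul_of_infEDist_le_mul hκ.le (hreg xb (-t) (by simpa using hε) htε) ?_
      (y' := (0, 0)) ⟨by simp [cmap], by simpa [cmap] using hfeas⟩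
      (by simp [Prod.dist_eq, abs_of_pos ht, ht.le])
    rintro z ⟨hz1, hz2⟩
    simp only [cmap, mem_ofPred_eq, mem_Iic, sub_zero] at hz1 hz2
    by_contra! hzr
    have : f xb ≤ f z := hrmin ⟨by rwa [Metric.mem_ball, dist_comm], hz2⟩
    linarith
  have : κ * t ≤ r / 2 := calc
    κ * t ≤ κ * (r / (2 * κ)) := mul_le_mul_of_nonneg_left (min_le_right _ _) hκ.le
    _ = r / 2 := by field_simp
  linarith

theorem smul_mem_dirNbhd {u : E} {t ρ δ : ℝ} (ht : 0 ≤ t) (htρ : t * ‖u‖ ≤ ρ) (hδ : 0 ≤ δ) :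
    t • u ∈ dirNbhd u ρ δ := by
  have hnorm : ‖t • u‖ = t * ‖u‖ := by rw [norm_smul, Real.norm_of_nonneg ht]
  refine ⟨hnorm ▸ htρ, ?_⟩
  rw [hnorm, smul_smul, mul_comm, sub_self, norm_zero]
  positivity

theorem eventually_pow_mul_lt {k : ℕ} (hk : k ≠ 0) (c : ℝ) {ρ : ℝ} (hρ : 0 < ρ) :
    ∀ᶠ t in 𝓝[>] (0 : ℝ), t ^ k * c < ρ := by
  have : Tendsto (fun t : ℝ => t ^ k * c) (𝓝 0) (𝓝 0) := by
    have : Continuous fun t : ℝ => t ^ k * c := by fun_prop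
    simpa [hk] using this.tendsto 0
  exact (this.eventually_lt_const hρ).filter_mono nhdsWithin_le_nhds

section InnerProduct

variable {H : Type*} [NormedAddCommGroup H] [InnerProductSpace ℝ H]

theorem mul_norm_le_dist_add_smul {x z u : H} (t : ℝ) (hz : ⟪u, z - x⟫ ≤ 0) :
    t * ‖u‖ ≤ dist (x + t • u) z := by
  have key : ‖u‖ * (t * ‖u‖) ≤ ‖u‖ * dist (x + t • u) z := calc
    ‖u‖ * (t * ‖u‖) = ⟪u, x + t • u - z⟫ + ⟪u, z - x⟫ := by
      rw [← inner_add_right, show x + t • u - z + (z - x) = t • u by abel,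
        real_inner_smul_right, real_inner_self_eq_norm_sq]
      ring
    _ ≤ ‖u‖ * ‖x + t • u - z‖ := by linarith [real_inner_le_norm u (x + t • u - z)]
    _ = ‖u‖ * dist (x + t • u) z := by rw [dist_eq_norm]
  rcases (norm_nonneg u).eq_or_lt with hu | hu
  · simp [← hu]
  · exact le_of_mul_le_mul_left key hu

theorem eventually_mul_norm_le_dist {f : H → ℝ} {S : Set H} {xb : H}
    (hmin : IsLocalMinOn f S xb) (u : H) :
    ∀ᶠ t in 𝓝[>] (0 : ℝ), ∀ z ∈ S, f z - f xb + ⟪u, z - xb⟫ ^ 3 ≤ 0 →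
      t * ‖u‖ ≤ dist (xb + t • u) z := by
  obtain ⟨r, hr, hrmin⟩ := Metric.mem_nhdsWithin_iff.1 hmin
  have hsmall : ∀ᶠ t in 𝓝[>] (0 : ℝ), t * ‖u‖ < r / 2 := by
    simpa using eventually_pow_mul_lt one_ne_zero ‖u‖ (half_pos hr)
  filter_upwards [hsmall, eventually_mem_nhdsWithin] with t htr (ht : 0 < t) z hz hobj
  by_cases hnear : dist z xb < r
  · have : f xb ≤ f z := hrmin ⟨hnear, hz⟩
    exact mul_norm_le_dist_add_smul t ((Odd.pow_nonpos_iff (n := 3) ⟨1, rfl⟩).1 (by linarith))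
  · have hdist : dist (xb + t • u) xb = t * ‖u‖ := by
      rw [dist_eq_norm, add_sub_cancel_left, norm_smul, Real.norm_of_nonneg ht.le]
    linarith [dist_triangle z (xb + t • u) xb, dist_comm z (xb + t • u)]

theorem eventually_sub_add_inner_pow_le {f : H → ℝ} {xb u : H} (hf : DifferentiableAt ℝ f xb)
    (hfu : fderiv ℝ f xb u ≤ 0) {c : ℝ} (hc : 0 < c) :
    ∀ᶠ t in 𝓝[>] (0 : ℝ), f (xb + t • u) - f xb + ⟪u, xb + t • u - xb⟫ ^ 3 ≤ c * t := by
  filter_upwards [hf.eventually_norm_sub_le u (half_pos hc),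
    eventually_pow_mul_lt two_ne_zero (‖u‖ ^ 6) (half_pos hc), eventually_mem_nhdsWithin]
    with t hlin hcube (ht : 0 < t)
  rw [Real.norm_eq_abs, smul_eq_mul] at hlin
  rw [add_sub_cancel_left, real_inner_smul_right, real_inner_self_eq_norm_sq]
  have : (t * ‖u‖ ^ 2) ^ 3 = (t ^ 2 * ‖u‖ ^ 6) * t := by ring
  nlinarith [le_abs_self (f (xb + t • u) - f xb - t * fderiv ℝ f xb u),
    mul_nonpos_of_nonneg_of_nonpos ht.le hfu]

theorem not_subregDir_of_isLocalMinOn {f : H → ℝ} {F : H → Y} {Ω : Set Y} {xb u : H}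
    (hf : DifferentiableAt ℝ f xb) (hF : DifferentiableAt ℝ F xb)
    (hmin : IsLocalMinOn f {x | F x ∈ Ω} xb) (hu : u ≠ 0) (hfu : fderiv ℝ f xb u ≤ 0)
    (hΩu : ∀ᶠ s in 𝓝[>] (0 : ℝ), F xb + s • fderiv ℝ F xb u ∈ Ω) :
    ¬ SubregDir (fun x => cmap (fun x' => f x' - f xb + ⟪u, x' - xb⟫ ^ 3) (Iic (0 : ℝ)) x ×ˢ
      cmap F Ω x) xb 0 u := by
  rintro ⟨-, ρ, hρ, δ, hδ, κ, hκ, hsub⟩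
  have hu' : 0 < ‖u‖ := norm_pos_iff.2 hu
  obtain ⟨c, hc, hκc⟩ : ∃ c, 0 < c ∧ κ * c = ‖u‖ / 2 :=
    ⟨‖u‖ / (2 * κ), by positivity, by field_simp⟩
  have hρ' : ∀ᶠ t in 𝓝[>] (0 : ℝ), t * ‖u‖ < ρ := by
    simpa using eventually_pow_mul_lt one_ne_zero ‖u‖ hρ
  obtain ⟨t, (ht : 0 < t), htρ, hlow, hobj, hcon, hΩt⟩ := (eventually_mem_nhdsWithin.and (hρ'.and
    ((eventually_mul_norm_le_dist hmin u).and ((eventually_sub_add_inner_pow_le hf hfu hc).and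
      ((hF.eventually_norm_sub_le u hc).and hΩu))))).exists
  have hbound : t * ‖u‖ ≤ κ * (c * t) := by
    refine le_mul_of_infEDist_le_mul hκ.le (hsub (t • u) (smul_mem_dirNbhd ht.le htρ.le hδ.le)) ?_
      (y' := (max (f (xb + t • u) - f xb + ⟪u, xb + t • u - xb⟫ ^ 3) 0,
        F (xb + t • u) - (F xb + t • fderiv ℝ F xb u))) ⟨?_, ?_⟩ ?_
    · rintro z ⟨hz1, hz2⟩
      simp only [cmap, mem_ofPred_eq, mem_Iic, Prod.fst_zero, Prod.snd_zero, sub_zero] at hz1 hz2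
      exact hlow z hz2 hz1
    · simp [cmap]
    · simpa [cmap] using hΩt
    · rw [Prod.dist_eq]
      dsimp only
      rw [Prod.fst_zero, Prod.snd_zero, dist_zero_left, dist_zero_left,
        Real.norm_of_nonneg (le_max_right _ _)]
      refine max_le (max_le hobj (by positivity)) ?_
      rwa [sub_add_eq_sub_sub]
  rw [← mul_assoc, hκc] at hbound
  nlinarith

end InnerProduct

/-- Proposition 3.1: at a local minimizer, `𝓜^{0,x̄}` is not mixed metrically
regular/subregular at `(x̄,(0,0))`, and for every nonzero critical direction `u`
there is some `η` such that `𝓜^{η,x̄}` is not metrically subregular in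
direction `u` at `(x̄,(0,0))`. -/
theorem stmt5 {n m : ℕ}
    (f : Euc n → ℝ) (F : Euc n → Euc m)
    (hf : ContDiff ℝ 1 f) (hF : ContDiff ℝ 1 F)
    (Ω : Set (Euc m)) (hΩ : IsFinUnionPolyhedra Ω)
    (xb : Euc n) (hfeas : F xb ∈ Ω)
    (hmin : IsLocalMinOn f {x | F x ∈ Ω} xb) :
    ¬ MixedRegSubreg
        (cmap (fun x => f x - f xb + (inner ℝ (0 : Euc n) (x - xb) : ℝ) ^ 3)
          (Set.Iic (0 : ℝ)))
        (cmap F Ω) xb 0 0 ∧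
    ∀ u : Euc n, u ≠ 0 →
      fderiv ℝ F xb u ∈ tcone Ω (F xb) → fderiv ℝ f xb u ≤ 0 →
      ∃ η : Euc n,
        ¬ SubregDir
            (fun x =>
              (cmap (fun x' => f x' - f xb + (inner ℝ η (x' - xb) : ℝ) ^ 3)
                (Set.Iic (0 : ℝ)) x) ×ˢ (cmap F Ω x))
            xb 0 u := by
  refine ⟨?_, fun u hu hFu hfu => ⟨u, ?_⟩⟩
  · simpa only [inner_zero_left, ne_eq, OfNat.ofNat_ne_zero, not_false_eq_true, zero_pow,
      add_zero] using not_mixedRegSubreg_of_isLocalMinOn hfeas hmin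
  · exact not_subregDir_of_isLocalMinOn (hf.differentiable one_ne_zero xb)
      (hF.differentiable one_ne_zero xb) hmin hu hfu
      (hΩ.eventually_add_smul_mem_of_mem_tcone hFu)
end
end

section
/- Let x̄ be feasible for the disjunctive program (P), assume the generalized Guignard constraint qualification GGCQ holds at x̄, and let conv T_lin(x̄) be finitely generated by a set 𝒰 = {u₁,…,u_N} ⊆ T_lin(x̄), i.e. conv T_lin(x̄) = {Σᵢ αᵢuᵢ : αᵢ ≥ 0}. Then the following are equivalent: (a) x̄ is B-stationary; (b) ∇f(x̄)u ≥ 0 for all u ∈ T_lin(x̄); (c) x̄ is extended M-stationary; (d) Λ¹(x̄;u) ≠ ∅ for every u ∈ 𝒰 ∩ 𝓒(x̄). -/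
noncomputable section

open Filter Topology Set

variable {E : Type*} [NormedAddCommGroup E] [NormedSpace ℝ E]
variable {Y : Type*} [NormedAddCommGroup Y] [NormedSpace ℝ Y]

/-- The multiplier set `Λ¹(x̄;u)` (no splitting of the constraints). -/
def Lam1 {n m : ℕ} (f : Euc n → ℝ) (F : Euc n → Euc m) (Ω : Set (Euc m))
    (xb u : Euc n) : Set (Euc m →L[ℝ] ℝ) :=
  {μ | μ ∈ dlnc Ω (F xb) (fderiv ℝ F xb u) ∧
    fderiv ℝ f xb + μ.comp (fderiv ℝ F xb) = 0}


/-!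
(a) ⇔ (b): in finite dimension the regular normal cone is the polar of the contingent cone,
so GGCQ turns B-stationarity into nonnegativity of `∇f(x̄)` on the cone `T_lin(x̄)`.

(d) ⇒ (b): a directional limiting normal to a union of polyhedra is nonpositive on its
direction, so a multiplier in `Λ¹(x̄;uᵢ)` forces `∇f(x̄)uᵢ ≥ 0`, and conic combinations of the
generators exhaust `T_lin(x̄)`.

(b) ⇒ (c): fix a critical `u` and put `v = ∇F(x̄)u`. For each polyhedral piece of `Ω` whose
tangent cone at `F(x̄)` contains `v`, let `Cᵢ` be the tangent cone of that polyhedral cone at `v`.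
Then `∇f(x̄) = ψ ∘ ∇F(x̄)` with `ψ ≥ 0` on every `Cᵢ ∩ range ∇F(x̄)`. By induction on dimension
(cutting the cones by a hyperplane through the range, then lifting back through finitely many
generators) `ψ` extends to some `β` such that `-β` is a regular normal to `⋃ Cᵢ` at some point
`z`. Then `-β` is a regular normal to `Ω` at `F(x̄) + t (v + ε z)` for small `t, ε > 0`, which
yields `-β ∈ N(F(x̄);Ω;v)`.
-/

theorem exists_seq_of_eventually_nhdsGT {Q : ℕ → ℝ → Prop}
    (h : ∀ k, ∀ᶠ t in 𝓝[>] (0 : ℝ), Q k t) :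
    ∃ t : ℕ → ℝ, (∀ k, 0 < t k) ∧ Tendsto t atTop (𝓝 0) ∧ ∀ k, Q k (t k) := by
  have hQ (k : ℕ) : ∃ s, Q k s ∧ s ∈ Ioo 0 (1 / ((k : ℝ) + 1)) :=
    ((h k).and (Ioo_mem_nhdsGT (by positivity))).exists
  choose t hQt ht using hQ
  exact ⟨t, fun k => (ht k).1, squeeze_zero (fun k => (ht k).1.le) (fun k => (ht k).2.le)
    tendsto_one_div_add_atTop_nhds_zero_nat, hQt⟩

theorem exists_subseq_mem_of_mem_iUnion {α ι : Type*} [Finite ι] {s : ι → Set α}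
    {x : ℕ → α} (hx : ∀ k, x k ∈ ⋃ i, s i) :
    ∃ i, ∃ φ : ℕ → ℕ, StrictMono φ ∧ ∀ k, x (φ k) ∈ s i := by
  obtain ⟨i, hi⟩ := frequently_exists.mp
    (Eventually.of_forall (f := atTop) fun k => mem_iUnion.mp (hx k)).frequently
  exact ⟨i, extraction_of_frequently_atTop hi⟩

theorem nonpos_of_forall_pos_le_mul {r c : ℝ} (h : ∀ ε > 0, r ≤ ε * c) : r ≤ 0 := by
  have hlim : Tendsto (fun ε : ℝ => ε * c) (𝓝[>] 0) (𝓝 0) := by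
    simpa using tendsto_nhdsWithin_of_tendsto_nhds ((continuous_mul_const c).tendsto 0)
  exact ge_of_tendsto hlim (eventually_nhdsWithin_of_forall h)

section Cones

variable {Ω : Set E} {x v : E}

theorem mem_tcone_of_eventually_s9 (hx : x ∈ Ω) (h : ∀ᶠ t in 𝓝[>] (0 : ℝ), x + t • v ∈ Ω) :
    v ∈ tcone Ω x := by
  obtain ⟨t, htpos, ht0, hmem⟩ := exists_seq_of_eventually_nhdsGT fun _ => h
  exact ⟨hx, t, fun _ => v, htpos, ht0, tendsto_const_nhds, hmem⟩

theorem zero_mem_tcone (hx : x ∈ Ω) : (0 : E) ∈ tcone Ω x :=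
  mem_tcone_of_eventually_s9 hx (Eventually.of_forall fun _ => by simpa using hx)

theorem smul_mem_tcone {s : ℝ} (hs : 0 < s) (hv : v ∈ tcone Ω x) : s • v ∈ tcone Ω x := by
  obtain ⟨hx, t, w, htpos, ht0, hwv, hmem⟩ := hv
  refine ⟨hx, fun k => t k / s, fun k => s • w k, fun k => div_pos (htpos k) hs,
    by simpa using ht0.div_const s, hwv.const_smul s, fun k => ?_⟩
  rw [smul_smul, div_mul_cancel₀ _ hs.ne']
  exact hmem k

theorem apply_nonpos_of_mem_fnc {ξ : E →L[ℝ] ℝ} (hξ : ξ ∈ fnc Ω x) (hv : v ∈ tcone Ω x) :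
    ξ v ≤ 0 := by
  obtain ⟨-, t, w, htpos, ht0, hwv, hmem⟩ := hv
  refine nonpos_of_forall_pos_le_mul (c := ‖v‖) fun ε hε => ?_
  obtain ⟨δ, hδ, hξδ⟩ := hξ.2 ε hε
  have hstep : Tendsto (fun k => t k • w k) atTop (𝓝 0) := by simpa using ht0.smul hwv
  refine le_of_tendsto_of_tendsto ((ξ.continuous.tendsto v).comp hwv) (hwv.norm.const_mul ε) ?_
  filter_upwards [hstep.norm.eventually (gt_mem_nhds (by simpa using hδ))] with k hk
  have h := hξδ _ (hmem k) (by simpa using hk)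
  rw [add_sub_cancel_left, map_smul, norm_smul, Real.norm_of_nonneg (htpos k).le, smul_eq_mul,
    mul_left_comm] at h
  exact le_of_mul_le_mul_left h (htpos k)

theorem mem_fnc_of_forall_tcone [ProperSpace E] (hx : x ∈ Ω) {ξ : E →L[ℝ] ℝ}
    (hξ : ∀ v ∈ tcone Ω x, ξ v ≤ 0) : ξ ∈ fnc Ω x := by
  refine ⟨hx, fun ε hε => ?_⟩
  by_contra! hbad
  choose y hyΩ hynear hybig using fun k : ℕ => hbad (1 / ((k : ℝ) + 1)) (by positivity)
  have hpos (k : ℕ) : 0 < ‖y k - x‖ := by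
    refine norm_pos_iff.mpr fun h => ?_
    simpa [h] using hybig k
  set d : ℕ → E := fun k => ‖y k - x‖⁻¹ • (y k - x)
  have hd (k : ℕ) : d k ∈ Metric.sphere (0 : E) 1 := by
    simp [d, norm_smul, (hpos k).ne']
  obtain ⟨e, -, φ, hφ, hde⟩ := (isCompact_sphere (0 : E) 1).tendsto_subseq hd
  have he : e ∈ tcone Ω x := by
    refine ⟨hx, fun k => ‖y (φ k) - x‖, d ∘ φ, fun k => hpos _, ?_, hde, fun k => ?_⟩
    · exact squeeze_zero (fun k => (hpos _).le) (fun k => (hynear _).le)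
        (tendsto_one_div_add_atTop_nhds_zero_nat.comp hφ.tendsto_atTop)
    · simpa [d, smul_smul, (hpos (φ k)).ne'] using hyΩ (φ k)
  have hgt (k : ℕ) : ε ≤ ξ (d k) := by
    rw [map_smul, smul_eq_mul, le_inv_mul_iff₀ (hpos k), mul_comm]
    exact (hybig k).le
  linarith [hξ e he, ge_of_tendsto ((ξ.continuous.tendsto e).comp hde)
    (Eventually.of_forall fun k => hgt (φ k))]

theorem mem_fnc_iff_forall_tcone [ProperSpace E] (hx : x ∈ Ω) {ξ : E →L[ℝ] ℝ} :
    ξ ∈ fnc Ω x ↔ ∀ v ∈ tcone Ω x, ξ v ≤ 0 :=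
  ⟨fun hξ _ hv => apply_nonpos_of_mem_fnc hξ hv, mem_fnc_of_forall_tcone hx⟩

theorem mem_fnc_zero_iff {K : Set E} (h0 : (0 : E) ∈ K)
    (hK : ∀ v ∈ K, ∀ s : ℝ, 0 < s → s • v ∈ K) {ξ : E →L[ℝ] ℝ} :
    ξ ∈ fnc K 0 ↔ ∀ v ∈ K, ξ v ≤ 0 := by
  refine ⟨fun hξ v hv => apply_nonpos_of_mem_fnc hξ ?_, fun hξ => ⟨h0, fun ε hε => ?_⟩⟩
  · exact mem_tcone_of_eventually_s9 h0
      (eventually_nhdsWithin_of_forall fun s hs => by simpa using hK v hv s hs)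
  · exact ⟨1, one_pos, fun y hy _ => by simpa using (hξ y hy).trans (by positivity)⟩

end Cones

section Polyhedra

def polyCone (S : Finset (E →L[ℝ] ℝ)) : Set E := {y | ∀ a ∈ S, a y ≤ 0}

variable {n : ℕ} (a : Fin n → (E →L[ℝ] ℝ)) (b : Fin n → ℝ)

def polyhedron : Set E := {x | ∀ j, a j x ≤ b j}

/-- `polyCone (activeSet a b y)` is the tangent cone of `polyhedron a b` at `y`. -/
def activeSet (y : E) : Finset (E →L[ℝ] ℝ) :=
  open Classical in (Finset.univ.filter fun j => a j y = b j).image a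

variable {a b}

theorem mem_polyCone_activeSet {y d : E} :
    d ∈ polyCone (activeSet a b y) ↔ ∀ j, a j y = b j → a j d ≤ 0 := by
  simp [polyCone, activeSet]

theorem isClosed_polyhedron : IsClosed (polyhedron a b : Set E) := by
  have h : polyhedron a b = ⋂ j, a j ⁻¹' Iic (b j) := by ext; simp [polyhedron]
  exact h ▸ isClosed_iInter fun j => isClosed_Iic.preimage (a j).continuous

theorem sub_mem_polyCone_activeSet {x y : E} (hx : x ∈ polyhedron a b) :
    x - y ∈ polyCone (activeSet a b y) :=
  mem_polyCone_activeSet.mpr fun j hj => by simpa [hj] using hx j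

theorem eventually_add_smul_mem_polyhedron {y d : E} (hy : y ∈ polyhedron a b)
    (hd : d ∈ polyCone (activeSet a b y)) :
    ∀ᶠ t in 𝓝[>] (0 : ℝ), y + t • d ∈ polyhedron a b := by
  refine (eventually_all.mpr fun j => ?_).mono fun t ht => (ht : y + t • d ∈ polyhedron a b)
  rcases (hy j).eq_or_lt with h | h
  · filter_upwards [self_mem_nhdsWithin] with t (ht : 0 < t)
    simpa [h] using mul_nonpos_of_nonneg_of_nonpos ht.le (mem_polyCone_activeSet.mp hd j h)
  · have hc : Continuous fun t : ℝ => a j (y + t • d) := by fun_prop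
    filter_upwards [tendsto_nhdsWithin_of_tendsto_nhds (hc.tendsto' 0 _ (by simp))
      |>.eventually (gt_mem_nhds h)] with t ht using ht.le

theorem mem_polyCone_activeSet_of_tendsto {y v : E} {t : ℕ → ℝ} {w : ℕ → E}
    (htpos : ∀ k, 0 < t k) (ht0 : Tendsto t atTop (𝓝 0)) (hwv : Tendsto w atTop (𝓝 v))
    (hmem : ∀ k, y + t k • w k ∈ polyhedron a b) :
    y ∈ polyhedron a b ∧ v ∈ polyCone (activeSet a b y) := by
  have hy : y ∈ polyhedron a b := isClosed_polyhedron.mem_of_tendsto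
    (by simpa using tendsto_const_nhds.add (ht0.smul hwv)) (Eventually.of_forall hmem)
  refine ⟨hy, mem_polyCone_activeSet.mpr fun j hj => ?_⟩
  refine le_of_tendsto ((a j).continuous.tendsto v |>.comp hwv) (Eventually.of_forall fun k => ?_)
  have h := hmem k j
  rw [map_add, map_smul, hj, smul_eq_mul, add_le_iff_nonpos_right] at h
  exact nonpos_of_mul_nonpos_right h (htpos k)

end Polyhedra

section UnionPolyhedra

variable {ι : Type*} [Finite ι] {n : ι → ℕ} {a : ∀ i, Fin (n i) → (E →L[ℝ] ℝ)}
  {b : ∀ i, Fin (n i) → ℝ} {y v : E}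

theorem IsFinUnionPolyhedra.exists_eq_iUnion {Ω : Set E} (hΩ : IsFinUnionPolyhedra Ω) :
    ∃ (p : ℕ) (n : Fin p → ℕ) (a : ∀ i, Fin (n i) → (E →L[ℝ] ℝ)) (b : ∀ i, Fin (n i) → ℝ),
      Ω = ⋃ i, polyhedron (a i) (b i) := by
  obtain ⟨p, P, hP, rfl⟩ := hΩ
  choose n a b hab using hP
  exact ⟨p, n, a, b, by simp only [hab]; rfl⟩

theorem mem_tcone_iUnion_polyhedron_iff :
    v ∈ tcone (⋃ i, polyhedron (a i) (b i)) y ↔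
      ∃ i, y ∈ polyhedron (a i) (b i) ∧ v ∈ polyCone (activeSet (a i) (b i) y) := by
  constructor
  · rintro ⟨-, t, w, htpos, ht0, hwv, hmem⟩
    obtain ⟨i, φ, hφ, hφi⟩ := exists_subseq_mem_of_mem_iUnion hmem
    exact ⟨i, mem_polyCone_activeSet_of_tendsto (fun k => htpos _) (ht0.comp hφ.tendsto_atTop)
      (hwv.comp hφ.tendsto_atTop) hφi⟩
  · rintro ⟨i, hy, hv⟩
    exact mem_tcone_of_eventually_s9 (mem_iUnion_of_mem i hy)
      ((eventually_add_smul_mem_polyhedron hy hv).mono fun _ ht => mem_iUnion_of_mem i ht)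

theorem sub_mem_tcone_iUnion_polyhedron {i : ι} {x : E} (hx : x ∈ polyhedron (a i) (b i))
    (hy : y ∈ polyhedron (a i) (b i)) : x - y ∈ tcone (⋃ i, polyhedron (a i) (b i)) y :=
  mem_tcone_iUnion_polyhedron_iff.mpr ⟨i, hy, sub_mem_polyCone_activeSet hx⟩

theorem eventually_mem_polyhedron_imp (y : E) :
    ∀ᶠ x in 𝓝 y, ∀ i, x ∈ polyhedron (a i) (b i) → y ∈ polyhedron (a i) (b i) := by
  refine eventually_all.mpr fun i => ?_
  by_cases hy : y ∈ polyhedron (a i) (b i)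
  · exact Eventually.of_forall fun _ _ => hy
  · filter_upwards [isClosed_polyhedron.isOpen_compl.mem_nhds hy] with x hx hxi
    exact absurd hxi hx

theorem IsFinUnionPolyhedra.apply_nonpos_of_mem_dlnc {Ω : Set E} (hΩ : IsFinUnionPolyhedra Ω)
    {μ : E →L[ℝ] ℝ} (hμ : μ ∈ dlnc Ω y v) : μ v ≤ 0 := by
  obtain ⟨p, n, a, b, rfl⟩ := hΩ.exists_eq_iUnion
  obtain ⟨-, t, w, ξ, htpos, ht0, hwv, hξμ, hξ⟩ := hμ
  obtain ⟨i, φ, hφ, hφi⟩ := exists_subseq_mem_of_mem_iUnion fun k => (hξ k).1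
  have hφ' := hφ.tendsto_atTop
  obtain ⟨hy, hv⟩ := mem_polyCone_activeSet_of_tendsto (fun k => htpos _) (ht0.comp hφ')
    (hwv.comp hφ') hφi
  obtain ⟨s, hsP, hs⟩ := ((eventually_add_smul_mem_polyhedron hy hv).and
    self_mem_nhdsWithin).exists
  have hle (k : ℕ) : ξ (φ k) (s • v - t (φ k) • w (φ k)) ≤ 0 := by
    have h := apply_nonpos_of_mem_fnc (hξ (φ k)) (sub_mem_tcone_iUnion_polyhedron hsP (hφi k))
    rwa [add_sub_add_left_eq_sub] at h
  have hlim : Tendsto (fun k => ξ (φ k) (s • v - t (φ k) • w (φ k))) atTop (𝓝 (μ (s • v))) := by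
    have hdir : Tendsto (fun k => s • v - t (φ k) • w (φ k)) atTop (𝓝 (s • v)) := by
      simpa using tendsto_const_nhds.sub ((ht0.comp hφ').smul (hwv.comp hφ'))
    exact (isBoundedBilinearMap_apply.continuous.tendsto _).comp
      ((hξμ.comp hφ').prodMk_nhds hdir)
  have h := le_of_tendsto hlim (Eventually.of_forall hle)
  rw [map_smul, smul_eq_mul] at h
  exact nonpos_of_mul_nonpos_right h hs

end UnionPolyhedra

section PolyCone

variable {S : Finset (E →L[ℝ] ℝ)}

theorem zero_mem_polyCone (S : Finset (E →L[ℝ] ℝ)) : (0 : E) ∈ polyCone S := by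
  simp [polyCone]

theorem add_mem_polyCone {y z : E} (hy : y ∈ polyCone S) (hz : z ∈ polyCone S) :
    y + z ∈ polyCone S := fun a ha => by simpa using add_nonpos (hy a ha) (hz a ha)

theorem smul_mem_polyCone {y : E} {s : ℝ} (hs : 0 ≤ s) (hy : y ∈ polyCone S) :
    s • y ∈ polyCone S := fun a ha => by
  simpa using mul_nonpos_of_nonneg_of_nonpos hs (hy a ha)

theorem polyCone_anti {T : Finset (E →L[ℝ] ℝ)} (h : S ⊆ T) : polyCone T ⊆ (polyCone S : Set E) :=
  fun _ hy a ha => hy a (h ha)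

theorem smul_sub_smul_mem_polyCone {p q : E} {s t : ℝ} (hp : p ∈ polyCone S)
    (hq : q ∈ polyCone S) (hs : 0 ≤ s) (ht : t ≤ 0) : s • q - t • p ∈ polyCone S := by
  rw [sub_eq_add_neg, ← neg_smul]
  exact add_mem_polyCone (smul_mem_polyCone hs hq) (smul_mem_polyCone (neg_nonneg.mpr ht) hp)

open Classical in
theorem mem_polyCone_insert {a : E →L[ℝ] ℝ} {y : E} :
    y ∈ polyCone (insert a S) ↔ a y ≤ 0 ∧ y ∈ polyCone S := by
  simp [polyCone]

open Classical in
theorem mem_polyCone_insert_insert_neg {τ : E →L[ℝ] ℝ} {y : E} :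
    y ∈ polyCone (insert τ (insert (-τ) S)) ↔ y ∈ polyCone S ∧ τ y = 0 := by
  simp only [mem_polyCone_insert, neg_apply, neg_nonpos]
  exact ⟨fun h => ⟨h.2.2, le_antisymm h.1 h.2.1⟩, fun h => ⟨h.2.le, h.2.ge, h.1⟩⟩

/-- Constraints inactive at `z` keep their strict sign along `z + ε • y` for small `ε`. -/
theorem eventually_add_smul_mem_polyCone_iff (S : Finset (E →L[ℝ] ℝ)) (z y : E) :
    ∀ᶠ ε in 𝓝[>] (0 : ℝ),
      (z + ε • y ∈ polyCone S ↔ z ∈ polyCone S ∧ y ∈ polyCone {a ∈ S | a z = 0}) := by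
  have key : ∀ a ∈ S, ∀ᶠ ε in 𝓝[>] (0 : ℝ),
      (a (z + ε • y) ≤ 0 ↔ a z ≤ 0 ∧ (a z = 0 → a y ≤ 0)) := by
    intro a _
    have hlim : Tendsto (fun ε : ℝ => a (z + ε • y)) (𝓝[>] 0) (𝓝 (a z)) :=
      tendsto_nhdsWithin_of_tendsto_nhds ((by fun_prop : Continuous _).tendsto' 0 _ (by simp))
    rcases lt_trichotomy (a z) 0 with h | h | h
    · filter_upwards [hlim.eventually (gt_mem_nhds h)] with ε hε
      exact iff_of_true hε.le ⟨h.le, fun h' => absurd h' h.ne⟩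
    · filter_upwards [self_mem_nhdsWithin] with ε (hε : 0 < ε)
      rw [map_add, map_smul, h, smul_eq_mul, zero_add]
      exact ⟨fun h' => ⟨le_rfl, fun _ => nonpos_of_mul_nonpos_right h' hε⟩,
        fun h' => mul_nonpos_of_nonneg_of_nonpos hε.le (h'.2 rfl)⟩
    · filter_upwards [hlim.eventually (lt_mem_nhds h)] with ε hε
      exact iff_of_false hε.not_ge fun h' => h.not_ge h'.1
  filter_upwards [(eventually_all_finset S).mpr key] with ε hε
  change (∀ a ∈ S, a (z + ε • y) ≤ 0) ↔
    (∀ a ∈ S, a z ≤ 0) ∧ ∀ a ∈ {a ∈ S | a z = 0}, a y ≤ 0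
  simp only [Finset.mem_filter, and_imp]
  exact ⟨fun h => ⟨fun a ha => ((hε a ha).mp (h a ha)).1, fun a ha => ((hε a ha).mp (h a ha)).2⟩,
    fun h a ha => (hε a ha).mpr ⟨h.1 a ha, h.2 a ha⟩⟩

theorem exists_add_smul_mem_polyCone {z y : E} (hz : z ∈ polyCone S)
    (hy : y ∈ polyCone {a ∈ S | a z = 0}) : ∃ s : ℝ, 0 < s ∧ y + s • z ∈ polyCone S := by
  obtain ⟨ε, hεS, hε⟩ :=
    ((eventually_add_smul_mem_polyCone_iff S z y).and self_mem_nhdsWithin).exists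
  refine ⟨ε⁻¹, inv_pos.mpr hε, ?_⟩
  have h := smul_mem_polyCone (inv_pos.mpr hε).le (hεS.mpr ⟨hz, hy⟩)
  rwa [smul_add, smul_smul, inv_mul_cancel₀ (ne_of_gt hε), one_smul, add_comm] at h

end PolyCone

section Extension

theorem exists_max_ratio (G : Finset E) (τ β : E →L[ℝ] ℝ) (hG : ∃ g ∈ G, 0 < τ g) :
    ∃ p ∈ G, 0 < τ p ∧ ∀ g ∈ G, 0 < τ g → 0 ≤ β g - β p / τ p * τ g := by
  obtain ⟨g₀, hg₀, hτg₀⟩ := hG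
  obtain ⟨p, hp, hmax⟩ := Finset.exists_max_image {g ∈ G | 0 < τ g} (fun g => -β g / τ g)
    ⟨g₀, Finset.mem_filter.mpr ⟨hg₀, hτg₀⟩⟩
  obtain ⟨hpG, hτp⟩ := Finset.mem_filter.mp hp
  refine ⟨p, hpG, hτp, fun g hg hτg => ?_⟩
  have h := hmax g (Finset.mem_filter.mpr ⟨hg, hτg⟩)
  rw [div_le_iff₀ hτg, neg_div, neg_mul, neg_le_neg_iff] at h
  linarith

theorem exists_nonneg_add_mul_nonneg (G : Finset E) (a β : E →L[ℝ] ℝ)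
    (h₁ : ∀ g ∈ G, a g ≤ 0 → 0 ≤ β g)
    (h₂ : ∀ p ∈ G, ∀ q ∈ G, 0 < a p → a q < 0 → 0 ≤ β (a p • q - a q • p)) :
    ∃ c : ℝ, 0 ≤ c ∧ ∀ g ∈ G, 0 ≤ β g + c * a g := by
  by_cases hG : ∃ g ∈ G, 0 < a g
  swap
  · push Not at hG
    exact ⟨0, le_rfl, fun g hg => by simpa using h₁ g hg (hG g hg)⟩
  obtain ⟨p, hpG, hap, hmax⟩ := exists_max_ratio G a β hG
  rcases le_total 0 (β p / a p) with hr | hr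
  · refine ⟨0, le_rfl, fun g hg => ?_⟩
    rcases le_or_gt (a g) 0 with hag | hag
    · simpa using h₁ g hg hag
    · linarith [hmax g hg hag, mul_nonneg hr hag.le]
  · refine ⟨-(β p / a p), by linarith, fun g hg => ?_⟩
    rcases lt_trichotomy (a g) 0 with hag | hag | hag
    · have h := h₂ p hpG g hg hap hag
      rw [map_sub, map_smul, map_smul, smul_eq_mul, smul_eq_mul] at h
      have e : β g + -(β p / a p) * a g = (a p * β g - a g * β p) / a p := by
        field_simp
        ring
      exact e ▸ div_nonneg h hap.le
    · simpa [hag] using h₁ g hg hag.le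
    · linarith [hmax g hg hag]

/-- Minkowski–Weyl (an H-cone is finitely generated), stated through the functionals that are
nonnegative on the generators; proved by Fourier–Motzkin elimination. -/
theorem exists_generators_polyCone [FiniteDimensional ℝ E] (S : Finset (E →L[ℝ] ℝ)) :
    ∃ G : Finset E, ↑G ⊆ polyCone S ∧
      ∀ β : E →L[ℝ] ℝ, (∀ g ∈ G, 0 ≤ β g) → ∀ y ∈ polyCone S, 0 ≤ β y := by
  classical
  induction S using Finset.induction_on with
  | empty =>
    let B := Module.finBasis ℝ E
    refine ⟨Finset.univ.image B ∪ Finset.univ.image (-B ·), fun _ _ a ha => by simp at ha,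
      fun β hβ y _ => ?_⟩
    have hβ0 : β = 0 := ContinuousLinearMap.coe_injective <| B.ext fun i => by
      have h₁ := hβ (B i) (by simp)
      have h₂ := hβ (-B i) (Finset.mem_union_right _ (Finset.mem_image_of_mem _ (by simp)))
      simp only [map_neg, neg_nonneg] at h₂
      simpa using le_antisymm h₂ h₁
    simp [hβ0]
  | insert a S _ ih =>
    obtain ⟨G, hGS, hG⟩ := ih
    refine ⟨{g ∈ G | a g ≤ 0} ∪ ({pq ∈ G ×ˢ G | 0 < a pq.1 ∧ a pq.2 < 0}.image
      fun pq => a pq.1 • pq.2 - a pq.2 • pq.1), fun g hg => ?_, fun β hβ y hy => ?_⟩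
    · simp only [Finset.mem_coe, Finset.mem_union, Finset.mem_filter, Finset.mem_image,
        Finset.mem_product, Prod.exists] at hg
      rcases hg with ⟨hgG, hag⟩ | ⟨p, q, ⟨⟨hp, hq⟩, hap, haq⟩, rfl⟩
      · exact mem_polyCone_insert.mpr ⟨hag, hGS hgG⟩
      · exact mem_polyCone_insert.mpr ⟨by simp [mul_comm],
          smul_sub_smul_mem_polyCone (hGS hp) (hGS hq) hap.le haq.le⟩
    · obtain ⟨hay, hyS⟩ := mem_polyCone_insert.mp hy
      obtain ⟨c, hc, hcG⟩ := exists_nonneg_add_mul_nonneg G a β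
        (fun g hg hag => hβ g (by simp [hg, hag]))
        (fun p hp q hq hap haq => hβ _ (Finset.mem_union_right _
          (Finset.mem_image.mpr ⟨(p, q), by simp [hp, hq, hap, haq], rfl⟩)))
      have h := hG (β + c • a) (fun g hg => by simpa using hcG g hg) y hyS
      simp only [add_apply, smul_apply, smul_eq_mul] at h
      linarith [mul_nonpos_of_nonneg_of_nonpos hc hay]

open Classical in
/-- Equivalently, `-β` is a regular normal at `z` to `⋃ i, polyCone (S i)`. -/
def SupportsAt {ι : Type*} (S : ι → Finset (E →L[ℝ] ℝ)) (β : E →L[ℝ] ℝ) (z : E) : Prop :=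
  (∃ i, z ∈ polyCone (S i)) ∧ β z = 0 ∧
    ∀ i, z ∈ polyCone (S i) → ∀ y ∈ polyCone (S i), 0 ≤ β y

variable [FiniteDimensional ℝ E] {ι : Type*} [Finite ι]

theorem exists_supportsAt_add_smul_of_pos (S : ι → Finset (E →L[ℝ] ℝ)) (τ β : E →L[ℝ] ℝ)
    (hβ : ∀ i, ∀ y ∈ polyCone (S i), τ y = 0 → 0 ≤ β y)
    (hpos : ∃ i, ∃ y ∈ polyCone (S i), 0 < τ y) :
    ∃ (c : ℝ) (z : E), SupportsAt S (β + c • τ) z := by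
  classical
  have := Fintype.ofFinite ι
  choose G hGS hG using fun i => exists_generators_polyCone (S i)
  have hGpos : ∃ g ∈ Finset.univ.biUnion G, 0 < τ g := by
    obtain ⟨i, y, hy, hτy⟩ := hpos
    by_contra! h
    have hτ := hG i (-τ) (fun g hg => by
      simpa using h g (Finset.mem_biUnion.mpr ⟨i, by simp, hg⟩)) y hy
    simp only [neg_apply, neg_nonneg] at hτ
    linarith
  obtain ⟨p, hp, hτp, hmax⟩ := exists_max_ratio _ τ β hGpos
  obtain ⟨i₀, -, hpi₀⟩ := Finset.mem_biUnion.mp hp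
  refine ⟨-(β p / τ p), p, ⟨i₀, hGS i₀ hpi₀⟩, by simp [div_mul_cancel₀ _ hτp.ne'],
    fun i hpi => hG i _ fun g hg => ?_⟩
  simp only [add_apply, smul_apply, smul_eq_mul, neg_mul, ← sub_eq_add_neg]
  rcases lt_or_ge 0 (τ g) with hτg | hτg
  · exact hmax g (Finset.mem_biUnion.mpr ⟨i, by simp, hg⟩) hτg
  · have h := hβ i _ (smul_sub_smul_mem_polyCone hpi (hGS i hg) hτp.le hτg)
      (by simp [mul_comm])
    rw [map_sub, map_smul, map_smul, smul_eq_mul, smul_eq_mul] at h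
    have e : β g - β p / τ p * τ g = (τ p * β g - τ g * β p) / τ p := by
      field_simp
    exact e ▸ div_nonneg h hτp.le

theorem exists_supportsAt_add_smul [Nonempty ι] (S : ι → Finset (E →L[ℝ] ℝ)) (τ β : E →L[ℝ] ℝ)
    (hβ : ∀ i, ∀ y ∈ polyCone (S i), τ y = 0 → 0 ≤ β y) :
    ∃ (c : ℝ) (z : E), SupportsAt S (β + c • τ) z := by
  by_cases hpos : ∃ i, ∃ y ∈ polyCone (S i), 0 < τ y
  · exact exists_supportsAt_add_smul_of_pos S τ β hβ hpos
  by_cases hneg : ∃ i, ∃ y ∈ polyCone (S i), τ y < 0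
  · obtain ⟨c, z, hz⟩ := exists_supportsAt_add_smul_of_pos S (-τ) β
      (fun i y hy hτy => hβ i y hy (by simpa using hτy)) (by simpa using hneg)
    exact ⟨-c, z, by convert hz using 2; ext; simp⟩
  push Not at hpos hneg
  refine ⟨0, 0, ⟨Classical.arbitrary ι, zero_mem_polyCone _⟩, by simp, fun i _ y hy => ?_⟩
  simpa using hβ i y hy (le_antisymm (hpos i y hy) (hneg i y hy))

open Classical in
/-- The new base point is `z₁ + ε • z₂`, where `z₂` comes from the codimension-one case applied
to the faces at `z₁` of the cones containing `z₁`. -/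
theorem exists_supportsAt_of_supportsAt_cut (S : ι → Finset (E →L[ℝ] ℝ)) (τ β : E →L[ℝ] ℝ)
    {z₁ : E} (h : SupportsAt (fun i => insert τ (insert (-τ) (S i))) β z₁) :
    ∃ (c : ℝ) (z : E), SupportsAt S (β + c • τ) z := by
  obtain ⟨⟨i₁, hz₁i₁⟩, hβz₁, hsupp⟩ := h
  have hτz₁ : τ z₁ = 0 := (mem_polyCone_insert_insert_neg.mp hz₁i₁).2
  let D : {i // z₁ ∈ polyCone (S i)} → Finset (E →L[ℝ] ℝ) := fun i => {a ∈ S i | a z₁ = 0}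
  have : Nonempty {i // z₁ ∈ polyCone (S i)} :=
    ⟨⟨i₁, (mem_polyCone_insert_insert_neg.mp hz₁i₁).1⟩⟩
  have hD : ∀ i, ∀ y ∈ polyCone (D i), τ y = 0 → 0 ≤ β y := by
    intro i y hy hτy
    obtain ⟨s, -, hys⟩ := exists_add_smul_mem_polyCone i.2 hy
    have h := hsupp i (mem_polyCone_insert_insert_neg.mpr ⟨i.2, hτz₁⟩) (y + s • z₁)
      (mem_polyCone_insert_insert_neg.mpr ⟨hys, by simp [hτy, hτz₁]⟩)
    simpa [hβz₁] using h
  obtain ⟨c, z₂, ⟨i₂, hz₂⟩, hβz₂, hsupp₂⟩ := exists_supportsAt_add_smul D τ β hD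
  obtain ⟨ε, hεS, -⟩ := ((eventually_all.mpr fun i =>
    eventually_add_smul_mem_polyCone_iff (S i) z₁ z₂).and self_mem_nhdsWithin).exists
  refine ⟨c, z₁ + ε • z₂, ⟨i₂, (hεS i₂).mpr ⟨i₂.2, hz₂⟩⟩, ?_, fun i hi y hy => ?_⟩
  · simp only [add_apply, smul_apply, smul_eq_mul, map_add, map_smul] at hβz₂ ⊢
    rw [hβz₁, hτz₁, hβz₂]
    ring
  · obtain ⟨hz₁, hz₂⟩ := (hεS i).mp hi
    exact hsupp₂ ⟨i, hz₁⟩ hz₂ y (polyCone_anti (Finset.filter_subset _ _) hy)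

theorem exists_clm_eq_zero_ne_zero {R : Submodule ℝ E} {y : E} (hy : y ∉ R) :
    ∃ τ : E →L[ℝ] ℝ, (∀ r ∈ R, τ r = 0) ∧ τ y ≠ 0 := by
  obtain ⟨f, hfy, hfR⟩ := Submodule.exists_dual_map_eq_bot_of_notMem hy inferInstance
  refine ⟨LinearMap.toContinuousLinearMap f, fun r hr => ?_, hfy⟩
  simpa using (Submodule.eq_bot_iff _).mp hfR (f r) (Submodule.mem_map_of_mem hr)

/-- Induction on the dimension of a subspace containing the cones: cutting them by a hyperplane
through `R` that misses one of them lowers that dimension. -/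
theorem exists_supportsAt_eqOn [Nonempty ι] (S : ι → Finset (E →L[ℝ] ℝ)) (R : Submodule ℝ E)
    (ψ : E →L[ℝ] ℝ) (hψ : ∀ i, ∀ y ∈ polyCone (S i), y ∈ R → 0 ≤ ψ y) :
    ∃ (β : E →L[ℝ] ℝ) (z : E), (∀ r ∈ R, β r = ψ r) ∧ SupportsAt S β z := by
  classical
  obtain ⟨W, hSW⟩ : ∃ W : Submodule ℝ E, ∀ i, polyCone (S i) ⊆ (W : Set E) :=
    ⟨⊤, fun _ _ _ => Submodule.mem_top⟩
  induction hW : Module.finrank ℝ W using Nat.strong_induction_on generalizing W S with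
  | _ d IH =>
  by_cases hR : ∀ i, polyCone (S i) ⊆ (R : Set E)
  · exact ⟨ψ, 0, fun _ _ => rfl, ⟨Classical.arbitrary ι, zero_mem_polyCone _⟩, map_zero ψ,
      fun i _ y hy => hψ i y hy (hR i hy)⟩
  simp only [not_forall, not_subset] at hR
  obtain ⟨i₀, y₀, hy₀, hy₀R⟩ := hR
  obtain ⟨τ, hτR, hτy₀⟩ := exists_clm_eq_zero_ne_zero hy₀R
  have hlt : Module.finrank ℝ (W ⊓ LinearMap.ker (τ : E →ₗ[ℝ] ℝ) : Submodule ℝ E) < d := by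
    refine hW ▸ Submodule.finrank_lt_finrank_of_lt (inf_le_left.lt_of_ne fun hWτ => hτy₀ ?_)
    have hy₀W : y₀ ∈ W ⊓ LinearMap.ker (τ : E →ₗ[ℝ] ℝ) := by
      rw [hWτ]
      exact hSW i₀ hy₀
    exact hy₀W.2
  obtain ⟨β, z, hβR, hβz⟩ := IH _ hlt (fun i => insert τ (insert (-τ) (S i)))
    (fun i y hy hyR => hψ i y (mem_polyCone_insert_insert_neg.mp hy).1 hyR)
    (W ⊓ LinearMap.ker (τ : E →ₗ[ℝ] ℝ))
    (fun i y hy => ⟨hSW i (mem_polyCone_insert_insert_neg.mp hy).1,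
      (mem_polyCone_insert_insert_neg.mp hy).2⟩) rfl
  obtain ⟨c, z', hz'⟩ := exists_supportsAt_of_supportsAt_cut S τ β hβz
  exact ⟨β + c • τ, z', fun r hr => by simp [hβR r hr, hτR r hr], hz'⟩

end Extension

section Stationarity

variable {ι : Type*} [Finite ι] {n : ι → ℕ} {a : ∀ i, Fin (n i) → (E →L[ℝ] ℝ)}
  {b : ∀ i, Fin (n i) → ℝ}

/-- Perturbing the direction `v` to `v + ε • z` selects the pieces whose second-order cone
contains `z`; at points `y + t • (v + ε • z)` close to `y` the functional `-β` is then a regular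
normal. -/
theorem neg_mem_dlnc_of_nonneg [ProperSpace E] {y v z : E} {β : E →L[ℝ] ℝ}
    (hz : ∃ i, y ∈ polyhedron (a i) (b i) ∧ v ∈ polyCone (activeSet (a i) (b i) y) ∧
      z ∈ polyCone {c ∈ activeSet (a i) (b i) y | c v = 0})
    (hβ : ∀ i, y ∈ polyhedron (a i) (b i) → v ∈ polyCone (activeSet (a i) (b i) y) →
      z ∈ polyCone {c ∈ activeSet (a i) (b i) y | c v = 0} →
      ∀ w ∈ polyCone {c ∈ activeSet (a i) (b i) y | c v = 0}, 0 ≤ β w)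
    (hβv : β v = 0) (hβz : β z = 0) :
    -β ∈ dlnc (⋃ i, polyhedron (a i) (b i)) y v := by
  obtain ⟨i₂, hy₂, hv₂, hz₂⟩ := hz
  obtain ⟨ε, -, hε0, hεK⟩ := exists_seq_of_eventually_nhdsGT fun _ => eventually_all.mpr
    fun i => eventually_add_smul_mem_polyCone_iff (activeSet (a i) (b i) y) v z
  set d : ℕ → E := fun k => v + ε k • z
  have hd : Tendsto d atTop (𝓝 v) := by simpa using tendsto_const_nhds.add (hε0.smul_const z)
  have hβd (k : ℕ) : β (d k) = 0 := by simp [d, hβv, hβz]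
  have hnear (k : ℕ) : Tendsto (fun s : ℝ => y + s • d k) (𝓝[>] 0) (𝓝 y) :=
    tendsto_nhdsWithin_of_tendsto_nhds ((by fun_prop : Continuous _).tendsto' 0 _ (by simp))
  obtain ⟨t, htpos, ht0, htmem⟩ := exists_seq_of_eventually_nhdsGT fun k =>
    (eventually_add_smul_mem_polyhedron hy₂ ((hεK k i₂).mpr ⟨hv₂, hz₂⟩)).and
      ((hnear k).eventually (eventually_mem_polyhedron_imp (a := a) (b := b) y))
  refine ⟨mem_iUnion_of_mem i₂ hy₂, t, d, fun _ => -β, htpos, ht0, hd, tendsto_const_nhds,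
    fun k => mem_fnc_of_forall_tcone (mem_iUnion_of_mem i₂ (htmem k).1) fun w hw => ?_⟩
  obtain ⟨i, hpi, hwi⟩ := mem_tcone_iUnion_polyhedron_iff.mp hw
  have hdi : d k ∈ polyCone (activeSet (a i) (b i) y) := by
    have h := smul_mem_polyCone (inv_pos.mpr (htpos k)).le
      (sub_mem_polyCone_activeSet (y := y) hpi)
    rwa [add_sub_cancel_left, smul_smul, inv_mul_cancel₀ (htpos k).ne', one_smul] at h
  obtain ⟨hvi, hzi⟩ := (hεK k i).mp hdi
  obtain ⟨s, hsP, hs⟩ := ((eventually_add_smul_mem_polyhedron hpi hwi).and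
    self_mem_nhdsWithin).exists
  have hmem : t k • d k + s • w ∈ polyCone {c ∈ activeSet (a i) (b i) y | c v = 0} := by
    refine polyCone_anti (Finset.filter_subset _ _) ?_
    simpa [add_assoc] using sub_mem_polyCone_activeSet (y := y) hsP
  have h := hβ i ((htmem k).2 i hpi) hvi hzi _ hmem
  rw [map_add, map_smul, map_smul, hβd, smul_zero, zero_add, smul_eq_mul] at h
  simpa using nonneg_of_mul_nonneg_right h hs

end Stationarity

theorem exists_clm_comp_eq [FiniteDimensional ℝ Y] (A : E →L[ℝ] Y) (h : E →L[ℝ] ℝ)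
    (hker : ∀ x, A x = 0 → h x = 0) : ∃ ψ : Y →L[ℝ] ℝ, ψ.comp A = h := by
  have hmem : (h : E →ₗ[ℝ] ℝ) ∈ LinearMap.range (A : E →ₗ[ℝ] Y).dualMap := by
    rw [LinearMap.range_dualMap_eq_dualAnnihilator_ker, Submodule.mem_dualAnnihilator]
    exact hker
  obtain ⟨ψ, hψ⟩ := hmem
  exact ⟨LinearMap.toContinuousLinearMap ψ,
    ContinuousLinearMap.ext fun x => LinearMap.congr_fun hψ x⟩

theorem exists_mem_dlnc_add_comp_eq_zero [FiniteDimensional ℝ Y] {Ω : Set Y}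
    (hΩ : IsFinUnionPolyhedra Ω) {y : Y} (A : E →L[ℝ] Y) (h : E →L[ℝ] ℝ)
    (hh : ∀ x, A x ∈ tcone Ω y → 0 ≤ h x) {u : E} (hu : A u ∈ tcone Ω y) (hhu : h u ≤ 0) :
    ∃ μ ∈ dlnc Ω y (A u), h + μ.comp A = 0 := by
  obtain ⟨p, n, a, b, rfl⟩ := hΩ.exists_eq_iUnion
  have hhu0 : h u = 0 := le_antisymm hhu (hh u hu)
  have h0 : (0 : Y) ∈ tcone (⋃ i, polyhedron (a i) (b i)) y := zero_mem_tcone hu.1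
  obtain ⟨ψ, hψ⟩ := exists_clm_comp_eq A h fun x hx =>
    le_antisymm (by simpa using hh (-x) (by simpa [hx] using h0)) (hh x (by simpa [hx] using h0))
  let I := {i // y ∈ polyhedron (a i) (b i) ∧ A u ∈ polyCone (activeSet (a i) (b i) y)}
  let L : I → Finset (Y →L[ℝ] ℝ) := fun i => {c ∈ activeSet (a i.1) (b i.1) y | c (A u) = 0}
  obtain ⟨i₁, hi₁⟩ := mem_tcone_iUnion_polyhedron_iff.mp hu
  have : Nonempty I := ⟨⟨i₁, hi₁⟩⟩
  have hψL : ∀ i, ∀ w ∈ polyCone (L i), w ∈ LinearMap.range (A : E →ₗ[ℝ] Y) → 0 ≤ ψ w := by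
    rintro i w hw ⟨x, rfl⟩
    obtain ⟨s, -, hs⟩ := exists_add_smul_mem_polyCone i.2.2 hw
    have hx := hh (x + s • u) (by
      rw [map_add, map_smul]
      exact mem_tcone_iUnion_polyhedron_iff.mpr ⟨i, i.2.1, hs⟩)
    rw [map_add, map_smul, hhu0, smul_zero, add_zero, ← hψ] at hx
    exact hx
  obtain ⟨β, z, hβR, ⟨i₂, hz₂⟩, hβz, hβ⟩ :=
    exists_supportsAt_eqOn L (LinearMap.range (A : E →ₗ[ℝ] Y)) ψ hψL
  have hβA (x : E) : β (A x) = h x := by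
    rw [← hψ]
    exact hβR (A x) ⟨x, rfl⟩
  refine ⟨-β, neg_mem_dlnc_of_nonneg ⟨i₂, i₂.2.1, i₂.2.2, hz₂⟩
    (fun i hyi hvi hzi => hβ ⟨i, hyi, hvi⟩ hzi) (by rw [hβA, hhu0]) hβz, ?_⟩
  ext x
  simp [hβA]

theorem forall_tcone_nonneg_iff_of_fnc_eq [ProperSpace E] {Ω K : Set E} {x : E} (hx : x ∈ Ω)
    (h0 : (0 : E) ∈ K) (hK : ∀ v ∈ K, ∀ s : ℝ, 0 < s → s • v ∈ K) (hN : fnc Ω x = fnc K 0)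
    (g : E →L[ℝ] ℝ) : (∀ u ∈ tcone Ω x, 0 ≤ g u) ↔ ∀ u ∈ K, 0 ≤ g u := by
  have h := mem_fnc_iff_forall_tcone hx (ξ := -g)
  rw [hN, mem_fnc_zero_iff h0 hK] at h
  simpa using h.symm

theorem nonneg_of_nonneg_generators {K : Set E} {N : ℕ} {uu : Fin N → E}
    (hgen : convexHull ℝ K = {x | ∃ α : Fin N → ℝ, (∀ i, 0 ≤ α i) ∧ x = ∑ i, α i • uu i})
    {g : E →L[ℝ] ℝ} (hg : ∀ i, 0 ≤ g (uu i)) {u : E} (hu : u ∈ K) : 0 ≤ g u := by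
  obtain ⟨α, hα, rfl⟩ : u ∈ {x | ∃ α : Fin N → ℝ, (∀ i, 0 ≤ α i) ∧ x = ∑ i, α i • uu i} :=
    hgen ▸ subset_convexHull ℝ K hu
  simpa using Finset.sum_nonneg fun i _ => mul_nonneg (hα i) (hg i)

theorem stmt9_general {n m N : ℕ}
    (f : Euc n → ℝ) (F : Euc n → Euc m)
    (Ω : Set (Euc m)) (hΩ : IsFinUnionPolyhedra Ω)
    (xb : Euc n) (hfeas : F xb ∈ Ω)
    (hGGCQ : fnc {x | F x ∈ Ω} xb =
      fnc {u : Euc n | fderiv ℝ F xb u ∈ tcone Ω (F xb)} 0)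
    (uu : Fin N → Euc n)
    (huu : ∀ i, fderiv ℝ F xb (uu i) ∈ tcone Ω (F xb))
    (hgen : convexHull ℝ {u : Euc n | fderiv ℝ F xb u ∈ tcone Ω (F xb)} =
      {x : Euc n | ∃ α : Fin N → ℝ, (∀ i, 0 ≤ α i) ∧ x = ∑ i, α i • uu i}) :
    ((∀ u ∈ tcone {x | F x ∈ Ω} xb, 0 ≤ fderiv ℝ f xb u) ↔
      (∀ u : Euc n, fderiv ℝ F xb u ∈ tcone Ω (F xb) → 0 ≤ fderiv ℝ f xb u)) ∧
    ((∀ u : Euc n, fderiv ℝ F xb u ∈ tcone Ω (F xb) → 0 ≤ fderiv ℝ f xb u) ↔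
      (∀ u : Euc n, fderiv ℝ F xb u ∈ tcone Ω (F xb) → fderiv ℝ f xb u ≤ 0 →
        (Lam1 f F Ω xb u).Nonempty)) ∧
    ((∀ u : Euc n, fderiv ℝ F xb u ∈ tcone Ω (F xb) → fderiv ℝ f xb u ≤ 0 →
        (Lam1 f F Ω xb u).Nonempty) ↔
      (∀ i, fderiv ℝ F xb (uu i) ∈ tcone Ω (F xb) → fderiv ℝ f xb (uu i) ≤ 0 →
        (Lam1 f F Ω xb (uu i)).Nonempty)) := by
  have hab := forall_tcone_nonneg_iff_of_fnc_eq (x := xb) hfeas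
    (by simpa using zero_mem_tcone hfeas) (fun v hv s hs => by simpa using smul_mem_tcone hs hv)
    hGGCQ (fderiv ℝ f xb)
  have hbc (hb : ∀ u : Euc n, fderiv ℝ F xb u ∈ tcone Ω (F xb) → 0 ≤ fderiv ℝ f xb u)
      (u : Euc n) (hu : fderiv ℝ F xb u ∈ tcone Ω (F xb)) (hcrit : fderiv ℝ f xb u ≤ 0) :
      (Lam1 f F Ω xb u).Nonempty :=
    exists_mem_dlnc_add_comp_eq_zero hΩ _ _ hb hu hcrit
  have hdb (hd : ∀ i, fderiv ℝ F xb (uu i) ∈ tcone Ω (F xb) → fderiv ℝ f xb (uu i) ≤ 0 →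
      (Lam1 f F Ω xb (uu i)).Nonempty) (u : Euc n) (hu : fderiv ℝ F xb u ∈ tcone Ω (F xb)) :
      0 ≤ fderiv ℝ f xb u := by
    refine nonneg_of_nonneg_generators hgen (fun i => ?_) hu
    by_contra! hneg
    obtain ⟨μ, hμ, hμf⟩ := hd i (huu i) hneg.le
    have h := congrArg (fun T : Euc n →L[ℝ] ℝ => T (uu i)) hμf
    simp only [add_apply, ContinuousLinearMap.coe_comp, Function.comp_apply, zero_apply] at h
    linarith [hΩ.apply_nonpos_of_mem_dlnc hμ]
  exact ⟨hab, ⟨hbc, fun hc => hdb fun i => hc (uu i)⟩,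
    ⟨fun hc i => hc (uu i), fun hd => hbc (hdb hd)⟩⟩

/-- Theorem 3.9: under GGCQ and finite generation of `conv T_lin(x̄)`,
B-stationarity, first-order optimality on `T_lin(x̄)`, extended M-stationarity
and extended M-stationarity along the generators are all equivalent. -/
theorem stmt9 {n m N : ℕ}
    (f : Euc n → ℝ) (F : Euc n → Euc m)
    (hf : ContDiff ℝ 1 f) (hF : ContDiff ℝ 1 F)
    (Ω : Set (Euc m)) (hΩ : IsFinUnionPolyhedra Ω)
    (xb : Euc n) (hfeas : F xb ∈ Ω)
    (hGGCQ : fnc {x | F x ∈ Ω} xb =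
      fnc {u : Euc n | fderiv ℝ F xb u ∈ tcone Ω (F xb)} 0)
    (uu : Fin N → Euc n)
    (huu : ∀ i, fderiv ℝ F xb (uu i) ∈ tcone Ω (F xb))
    (hgen : convexHull ℝ {u : Euc n | fderiv ℝ F xb u ∈ tcone Ω (F xb)} =
      {x : Euc n | ∃ α : Fin N → ℝ, (∀ i, 0 ≤ α i) ∧ x = ∑ i, α i • uu i}) :
    ((∀ u ∈ tcone {x | F x ∈ Ω} xb, 0 ≤ fderiv ℝ f xb u) ↔
      (∀ u : Euc n, fderiv ℝ F xb u ∈ tcone Ω (F xb) → 0 ≤ fderiv ℝ f xb u)) ∧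
    ((∀ u : Euc n, fderiv ℝ F xb u ∈ tcone Ω (F xb) → 0 ≤ fderiv ℝ f xb u) ↔
      (∀ u : Euc n, fderiv ℝ F xb u ∈ tcone Ω (F xb) → fderiv ℝ f xb u ≤ 0 →
        (Lam1 f F Ω xb u).Nonempty)) ∧
    ((∀ u : Euc n, fderiv ℝ F xb u ∈ tcone Ω (F xb) → fderiv ℝ f xb u ≤ 0 →
        (Lam1 f F Ω xb u).Nonempty) ↔
      (∀ i, fderiv ℝ F xb (uu i) ∈ tcone Ω (F xb) → fderiv ℝ f xb (uu i) ≤ 0 →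
        (Lam1 f F Ω xb (uu i)).Nonempty)) :=
  stmt9_general f F Ω hΩ xb hfeas hGGCQ uu huu hgen
end
end
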